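/- arXiv:2102.06193 — 8 statements merged into one kernel-verified Lean document; each statement's English description precedes it below -/
import Mathlib

section
/- For every l ∈ ℕ and every x ≥ 0, x^l = ∑_{k=0}^{l} (−1)^k · C(l,k) · l! · L_k(x), where L_k is the k-th Laguerre polynomial. -/
/-!
The matrix `(-1)^k C(k,j)` is its own inverse (binomial inversion), since
`∑_k (-1)^k C(n,k) C(k,j)` is the coefficient of `X^j` in `(1 - (X + 1))^n = (-X)^n`.
Expanding each `L_k` in monomials and summing over `k` first therefore leaves only `x^l`.
-/

/-- The `k`-th Laguerre polynomial: `L_k(x) = ∑_{l=0}^k ((-1)^l / l!) C(k,l) x^l`. -/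
noncomputable def laguerreL (k : ℕ) (x : ℝ) : ℝ :=
  ∑ l ∈ Finset.range (k + 1), ((-1 : ℝ) ^ l / (l.factorial : ℝ)) * (k.choose l : ℝ) * x ^ l

open Finset Polynomial

theorem sum_range_neg_one_pow_mul_choose_mul_choose {R : Type*} [CommRing R] (n j : ℕ) :
    ∑ k ∈ range (n + 1), (-1 : R) ^ k * n.choose k * k.choose j =
      if j = n then (-1) ^ n else 0 := by
  have expand : C ((-1 : R) ^ n) * X ^ n =
      ∑ k ∈ range (n + 1), C ((-1) ^ k * (n.choose k : R)) * (X + 1) ^ k := by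
    rw [map_pow, map_neg, map_one, ← mul_pow, neg_one_mul,
      show (-X : R[X]) = -(X + 1) + 1 by ring, add_pow]
    refine sum_congr rfl fun k _ => ?_
    rw [neg_pow, one_pow, mul_one, map_mul, map_pow, map_neg, map_one, map_natCast]
    ring
  have := congrArg (coeff · j) expand
  simp only [finsetSum_coeff, coeff_C_mul, coeff_X_add_one_pow, coeff_X_pow, mul_ite, mul_one,
    mul_zero] at this
  rw [← this]

theorem laguerreL_eq_sum_range_of_le {k n : ℕ} (hkn : k ≤ n) (x : ℝ) :
    laguerreL k x =
      ∑ j ∈ range (n + 1), ((-1 : ℝ) ^ j / (j.factorial : ℝ)) * (k.choose j : ℝ) * x ^ j := by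
  refine sum_subset (range_subset_range.mpr (by omega)) fun j _ hj => ?_
  rw [Nat.choose_eq_zero_of_lt (by simpa using hj), Nat.cast_zero, mul_zero, zero_mul]

theorem monomial_eq_sum_laguerre_general (l : ℕ) (x : ℝ) :
    x ^ l = ∑ k ∈ Finset.range (l + 1),
      (-1 : ℝ) ^ k * (l.choose k : ℝ) * (l.factorial : ℝ) * laguerreL k x := by
  symm
  calc ∑ k ∈ range (l + 1), (-1 : ℝ) ^ k * l.choose k * l.factorial * laguerreL k x
      = ∑ j ∈ range (l + 1), ((-1) ^ j * l.factorial / j.factorial * x ^ j) *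
          ∑ k ∈ range (l + 1), (-1 : ℝ) ^ k * l.choose k * k.choose j := by
        simp_rw [mul_sum]
        rw [sum_comm]
        refine sum_congr rfl fun k hk => ?_
        rw [laguerreL_eq_sum_range_of_le (Nat.lt_succ_iff.mp (mem_range.mp hk)), mul_sum]
        exact sum_congr rfl fun j _ => by ring
    _ = x ^ l := by
        simp_rw [sum_range_neg_one_pow_mul_choose_mul_choose, mul_ite, mul_zero,
          sum_ite_eq' (range (l + 1)), if_pos (self_mem_range_succ l)]
        field_simp
        rw [← pow_mul, pow_mul', neg_one_sq, one_pow, one_mul]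

/-- for every `l` and every `x ≥ 0`,
`x^l = ∑_{k=0}^{l} (−1)^k C(l,k) l! L_k(x)`. -/
theorem monomial_eq_sum_laguerre (l : ℕ) (x : ℝ) (hx : 0 ≤ x) :
    x ^ l = ∑ k ∈ Finset.range (l + 1),
      (-1 : ℝ) ^ k * (l.choose k : ℝ) * (l.factorial : ℝ) * laguerreL k x :=
  monomial_eq_sum_laguerre_general l x
end

section
/- Let p ∈ ℕ and let P be a real univariate polynomial of degree at most 2p. Then P is nonnegative on all of ℝ if and only if there exists a real (p+1)×(p+1) positive semidefinite symmetric matrix Q (indexed by 0,…,p) such that for all x ∈ ℝ, P(x) = ∑_{i=0}^{p} ∑_{j=0}^{p} Q_{ij} x^{i+j}. -/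
/-!
A nonnegative real polynomial is a sum of two squares `A² + B²`. At a real root `a` it has a
local minimum, so `a` is a double root and `(X - a)²` divides it; without real roots it has a
monic irreducible quadratic factor, which completes to `(X + u)² + v²`. Either way the cofactor
is again nonnegative, and Brahmagupta's identity recombines the two sums of squares. The leading
coefficients of `A²` and `B²` cannot cancel, so `deg A, deg B ≤ p`, and the Gram matrix
`a aᵀ + b bᵀ` of the coefficient vectors of `A` and `B` represents the polynomial.
-/

open Polynomial Matrix

theorem Matrix.sum_mul_pow_add_eq_dotProduct_mulVec {R : Type*} [CommSemiring R] {n : ℕ}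
    (Q : Matrix (Fin n) (Fin n) R) (x : R) :
    ∑ i, ∑ j, Q i j * x ^ (i.val + j.val) =
      (fun i : Fin n => x ^ (i : ℕ)) ⬝ᵥ Q *ᵥ fun i : Fin n => x ^ (i : ℕ) := by
  simp only [dotProduct, mulVec, Finset.mul_sum, pow_add]
  refine Finset.sum_congr rfl fun i _ => Finset.sum_congr rfl fun j _ => ?_
  ring

namespace Polynomial

theorem natDegree_sq_add_sq {R : Type*} [CommRing R] [LinearOrder R] [IsStrictOrderedRing R]
    (A B : R[X]) : (A ^ 2 + B ^ 2).natDegree = 2 * max A.natDegree B.natDegree := by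
  set n := max A.natDegree B.natDegree
  refine le_antisymm ?_ ?_
  · calc (A ^ 2 + B ^ 2).natDegree ≤ max (A ^ 2).natDegree (B ^ 2).natDegree :=
          natDegree_add_le _ _
      _ ≤ 2 * n := max_le (natDegree_pow_le.trans (by omega)) (natDegree_pow_le.trans (by omega))
  rcases Nat.eq_zero_or_pos n with hn | hn
  · simp [hn]
  have hcoeff : (A ^ 2 + B ^ 2).coeff (2 * n) = A.coeff n ^ 2 + B.coeff n ^ 2 := by
    rw [coeff_add, coeff_pow_of_natDegree_le (le_max_left _ _ : A.natDegree ≤ n),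
      coeff_pow_of_natDegree_le (le_max_right _ _ : B.natDegree ≤ n)]
  refine le_natDegree_of_ne_zero (hcoeff ▸ ne_of_gt ?_)
  have hlead : A.coeff n ≠ 0 ∨ B.coeff n ≠ 0 := by
    rcases max_choice A.natDegree B.natDegree with h | h
    · left
      rw [show n = A.natDegree from h]
      exact leadingCoeff_ne_zero.2 (ne_zero_of_natDegree_gt (hn.trans_eq h))
    · right
      rw [show n = B.natDegree from h]
      exact leadingCoeff_ne_zero.2 (ne_zero_of_natDegree_gt (hn.trans_eq h))
  rcases hlead with h | h <;> positivity

theorem eval_nonneg_of_eval_mul_nonneg {f S : ℝ[X]} (hf0 : f ≠ 0) (hf : ∀ x, 0 ≤ f.eval x)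
    (h : ∀ x, 0 ≤ (f * S).eval x) (x : ℝ) : 0 ≤ S.eval x := by
  have hdense : Dense {x | f.IsRoot x}ᶜ := (finite_setOfPred_isRoot hf0).countable.dense_compl ℝ
  have hclosed : IsClosed {x | 0 ≤ S.eval x} := isClosed_le continuous_const S.continuous
  refine hclosed.closure_subset_iff.2 (fun y hy => ?_) (hdense.closure_eq ▸ Set.mem_univ x)
  exact nonneg_of_mul_nonneg_right (by simpa using h y) (lt_of_le_of_ne (hf y) (Ne.symm hy))

theorem sq_X_sub_C_dvd_of_isRoot_of_eval_nonneg {P : ℝ[X]} (hP : ∀ x, 0 ≤ P.eval x) {a : ℝ}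
    (ha : P.IsRoot a) : (X - C a) ^ 2 ∣ P := by
  rcases eq_or_ne P 0 with rfl | hP0
  · exact dvd_zero _
  have hmin : IsLocalMin (fun x => P.eval x) a :=
    Filter.Eventually.of_forall fun x => show P.eval a ≤ P.eval x from ha.eq_zero ▸ hP x
  have hderiv : P.derivative.IsRoot a := by
    rw [IsRoot, ← Polynomial.deriv]
    exact hmin.deriv_eq_zero
  exact (le_rootMultiplicity_iff hP0).1
    ((one_lt_rootMultiplicity_iff_isRoot hP0).2 ⟨ha, hderiv⟩)

theorem exists_eq_sq_add_sq_of_eval_ne_zero {b c : ℝ}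
    (h : ∀ x, (X ^ 2 + C b * X + C c).eval x ≠ 0) :
    ∃ u v : ℝ, X ^ 2 + C b * X + C c = (X + C u) ^ 2 + C v ^ 2 := by
  have hdisc : discrim 1 b c < 0 := by
    by_contra! hd
    obtain ⟨x, hx⟩ :=
      exists_quadratic_eq_zero one_ne_zero ⟨√(discrim 1 b c), (Real.mul_self_sqrt hd).symm⟩
    exact h x (by
      simp only [eval_add, eval_pow, eval_mul, eval_X, eval_C]
      linear_combination hx)
  have hv : √(c - b ^ 2 / 4) ^ 2 = c - b ^ 2 / 4 :=
    Real.sq_sqrt (by rw [discrim] at hdisc; linarith)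
  refine ⟨b / 2, √(c - b ^ 2 / 4), Polynomial.funext fun x => ?_⟩
  simp only [eval_add, eval_pow, eval_mul, eval_X, eval_C, hv]
  ring

theorem exists_sq_add_sq_dvd_of_eval_nonneg {P : ℝ[X]} (hP : ∀ x, 0 ≤ P.eval x)
    (hdeg : 0 < P.natDegree) :
    ∃ A B : ℝ[X], 0 < (A ^ 2 + B ^ 2).natDegree ∧ A ^ 2 + B ^ 2 ∣ P := by
  by_cases hroot : ∃ a, P.IsRoot a
  · obtain ⟨a, ha⟩ := hroot
    exact ⟨X - C a, 0, by simp [natDegree_pow],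
      by simpa using sq_X_sub_C_dvd_of_isRoot_of_eval_nonneg hP ha⟩
  push Not at hroot
  obtain ⟨f, hmonic, hirr, hf⟩ :=
    exists_monic_irreducible_factor P (not_isUnit_of_natDegree_pos P hdeg)
  have hfroot : ∀ x, f.eval x ≠ 0 := fun x hx => hroot x (IsRoot.dvd hx hf)
  have hf2 : f.natDegree = 2 := by
    have := hirr.natDegree_le_two
    have := hirr.natDegree_pos
    by_contra hf2
    obtain ⟨r, rfl⟩ := isMonicOfDegree_one_iff.1 ⟨by omega, hmonic⟩
    exact hfroot (-r) (by simp)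
  obtain ⟨b, c, rfl⟩ := isMonicOfDegree_two_iff.1 ⟨hf2, hmonic⟩
  obtain ⟨u, v, huv⟩ := exists_eq_sq_add_sq_of_eval_ne_zero hfroot
  exact ⟨X + C u, C v, by rw [← huv, hf2]; norm_num, huv ▸ hf⟩

theorem exists_eq_sq_add_sq_of_eval_nonneg {P : ℝ[X]} (hP : ∀ x, 0 ≤ P.eval x) :
    ∃ A B : ℝ[X], P = A ^ 2 + B ^ 2 := by
  induction hn : P.natDegree using Nat.strong_induction_on generalizing P with
  | _ n ih =>
  rcases Nat.eq_zero_or_pos n with rfl | hpos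
  · have hc : 0 ≤ P.coeff 0 := by simpa [coeff_zero_eq_eval_zero] using hP 0
    refine ⟨C √(P.coeff 0), 0, ?_⟩
    rw [← C_pow, Real.sq_sqrt hc, sq, mul_zero, add_zero]
    exact eq_C_of_natDegree_eq_zero hn
  obtain ⟨A, B, hdeg, S, rfl⟩ := exists_sq_add_sq_dvd_of_eval_nonneg hP (hn ▸ hpos)
  have hf0 : A ^ 2 + B ^ 2 ≠ 0 := ne_zero_of_natDegree_gt hdeg
  have hS0 : S ≠ 0 := by rintro rfl; rw [mul_zero, natDegree_zero] at hn; omega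
  have hS : ∀ x, 0 ≤ S.eval x :=
    eval_nonneg_of_eval_mul_nonneg hf0 (fun x => by simp only [eval_add, eval_pow]; positivity) hP
  obtain ⟨E, F, rfl⟩ := ih S.natDegree (by rw [← hn, natDegree_mul hf0 hS0]; omega) hS rfl
  exact ⟨_, _, sq_add_sq_mul_sq_add_sq⟩

theorem eval_eq_coeff_dotProduct {R : Type*} [CommSemiring R] {A : R[X]} {n : ℕ}
    (h : A.natDegree < n) (x : R) :
    A.eval x = (fun i : Fin n => A.coeff i) ⬝ᵥ fun i : Fin n => x ^ (i : ℕ) := by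
  rw [eval_eq_sum_range' h, ← Fin.sum_univ_eq_sum_range]
  rfl

theorem exists_posSemidef_gram_sq_add_sq {A B : ℝ[X]} {p : ℕ} (hA : A.natDegree ≤ p)
    (hB : B.natDegree ≤ p) : ∃ Q : Matrix (Fin (p + 1)) (Fin (p + 1)) ℝ, Q.PosSemidef ∧
      ∀ x : ℝ, (A ^ 2 + B ^ 2).eval x = ∑ i, ∑ j, Q i j * x ^ (i.val + j.val) := by
  let a : Fin (p + 1) → ℝ := fun i => A.coeff i
  let b : Fin (p + 1) → ℝ := fun i => B.coeff i
  refine ⟨vecMulVec a a + vecMulVec b b, ?_, fun x => ?_⟩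
  · simpa using (posSemidef_vecMulVec_self_star a).add (posSemidef_vecMulVec_self_star b)
  rw [sum_mul_pow_add_eq_dotProduct_mulVec, add_mulVec, vecMulVec_mulVec, vecMulVec_mulVec,
    eval_add, eval_pow, eval_pow, eval_eq_coeff_dotProduct (Nat.lt_succ_of_le hA) x,
    eval_eq_coeff_dotProduct (Nat.lt_succ_of_le hB) x]
  simp [a, b, dotProduct_add, dotProduct_comm, sq]

end Polynomial

/-- a real univariate polynomial of degree at most `2p` is nonnegative on ℝ
iff it admits a positive semidefinite Gram matrix representation
`P(x) = ∑_{i,j=0}^{p} Q_{ij} x^{i+j}`. -/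
theorem nonneg_poly_iff_psd_gram (p : ℕ) (P : Polynomial ℝ) (hdeg : P.natDegree ≤ 2 * p) :
    (∀ x : ℝ, 0 ≤ P.eval x) ↔
    ∃ Q : Matrix (Fin (p + 1)) (Fin (p + 1)) ℝ, Q.IsSymm ∧ Q.PosSemidef ∧
      ∀ x : ℝ, P.eval x =
        ∑ i : Fin (p + 1), ∑ j : Fin (p + 1), Q i j * x ^ (i.val + j.val) := by
  constructor
  · intro hP
    obtain ⟨A, B, rfl⟩ := exists_eq_sq_add_sq_of_eval_nonneg hP
    rw [natDegree_sq_add_sq] at hdeg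
    obtain ⟨Q, hQ, hrep⟩ :=
      exists_posSemidef_gram_sq_add_sq (A := A) (B := B) (p := p) (by omega) (by omega)
    exact ⟨Q, isHermitian_iff_isSymm.1 hQ.isHermitian, hQ, hrep⟩
  · rintro ⟨Q, -, hQ, hrep⟩ x
    rw [hrep, sum_mul_pow_add_eq_dotProduct_mulVec]
    simpa using hQ.dotProduct_mulVec_nonneg fun i => x ^ (i : ℕ)
end

section
/- Let m ∈ ℕ and let s : ℕ → ℝ be a real sequence. The following two conditions are equivalent: (i) for every choice of real coefficients g_0, …, g_m such that the function x ↦ ∑_{k=0}^{m} g_k 𝓛_k(x) is nonnegative at every x ≥ 0, one has ∑_{k=0}^{m} s_k g_k ≥ 0; (ii) the (m+1)×(m+1) real symmetric matrix A_s, with entries (A_s)_{ij} = ∑_{k=0}^{l} s_k · C(l,k) · l! when i+j = 2l is even and (A_s)_{ij} = 0 when i+j is odd (0 ≤ i,j ≤ m), is positive semidefinite. -/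
/-- The `k`-th Laguerre function: `𝓛_k(x) = (-1)^k L_k(x) e^{-x/2}`. -/
noncomputable def laguerreFun (k : ℕ) (x : ℝ) : ℝ :=
  (-1 : ℝ) ^ k * laguerreL k x * Real.exp (-x / 2)

/-!
Let `Λ_μ` be the linear functional on `ℝ[X]` with `Λ_μ (X ^ l) = μ_l`, where
`μ_l = l! ∑_k C(l,k) s_k`. The polynomial `(-1)^k L_k` is the image of `(X - 1)^k` under
`X^n ↦ X^n / n!`, and `μ_l / l! = Λ_s ((X + 1)^l)`, so `Λ_μ ((-1)^k L_k) = Λ_s (X^k) = s_k`.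
As the `(-1)^k L_k` with `k ≤ m` span the polynomials of degree `≤ m`, condition (i) says that
`Λ_μ P ≥ 0` for every such `P` that is nonnegative on `[0, ∞)`.

That is a truncated Stieltjes moment condition. `P ≥ 0` on `[0, ∞)` iff `P(X²) ≥ 0` on `ℝ`, iff
`P(X²) = a² + b²` with `deg a, deg b ≤ m`. The matrix `A` is the Hankel matrix of the sequence
`t` with `t_{2l} = μ_l` and `t_{2l+1} = 0`, so `yᵀ A y = Λ_t (D²)` for `D = ∑ y_i X^i`; and
`Λ_t Q = Λ_μ Q₀` where `Q₀(X²)` is the even part of `Q`, which for `Q = D²` is `≥ 0` on `[0, ∞)`.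
-/

open Polynomial Finset
open scoped Nat Matrix

namespace Polynomial

variable {R : Type*} [CommRing R]

noncomputable def momentFunctional (μ : ℕ → R) : R[X] →ₗ[R] R :=
  lsum fun n => μ n • LinearMap.id

@[simp]
theorem momentFunctional_monomial (μ : ℕ → R) (n : ℕ) (a : R) :
    momentFunctional μ (monomial n a) = μ n * a := by
  simp [momentFunctional, sum_monomial_index]

theorem momentFunctional_eq_sum_range (μ : ℕ → R) {p : R[X]} {n : ℕ} (hp : p.natDegree < n) :
    momentFunctional μ p = ∑ i ∈ range n, μ i * p.coeff i := by
  simp only [momentFunctional, lsum_apply, LinearMap.smul_apply, LinearMap.id_apply, smul_eq_mul]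
  exact sum_over_range' p (fun _ => mul_zero _) n hp

noncomputable def scaleCoeff (w : ℕ → R) : R[X] →ₗ[R] R[X] :=
  lsum fun n => w n • monomial n

@[simp]
theorem scaleCoeff_monomial (w : ℕ → R) (n : ℕ) (a : R) :
    scaleCoeff w (monomial n a) = monomial n (w n * a) := by
  simp [scaleCoeff, sum_monomial_index, smul_monomial]

@[simp]
theorem coeff_scaleCoeff (w : ℕ → R) (p : R[X]) (n : ℕ) :
    (scaleCoeff w p).coeff n = w n * p.coeff n := by
  induction p using Polynomial.induction_on' with
  | add p q hp hq => simp [hp, hq, mul_add]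
  | monomial k a => by_cases h : k = n <;> simp [coeff_monomial, h]

theorem natDegree_scaleCoeff_le (w : ℕ → R) (p : R[X]) :
    (scaleCoeff w p).natDegree ≤ p.natDegree :=
  natDegree_le_iff_coeff_eq_zero.2 fun _ hN => by
    rw [coeff_scaleCoeff, coeff_eq_zero_of_natDegree_lt hN, mul_zero]

theorem contract_monomial {p : ℕ} (hp : p ≠ 0) (n : ℕ) (a : R) :
    contract p (monomial n a) = if n % p = 0 then monomial (n / p) a else 0 := by
  ext k
  rw [coeff_contract hp, coeff_monomial]
  by_cases hn : n % p = 0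
  · obtain ⟨j, rfl⟩ : ∃ j, n = j * p :=
      ⟨n / p, (Nat.div_mul_cancel (Nat.dvd_of_mod_eq_zero hn)).symm⟩
    rw [if_pos hn, Nat.mul_div_cancel _ (Nat.pos_of_ne_zero hp), coeff_monomial]
    simp only [Nat.mul_right_cancel_iff (Nat.pos_of_ne_zero hp)]
  · rw [if_neg hn, if_neg fun h : n = k * p => hn (h ▸ Nat.mul_mod_left k p), coeff_zero]

theorem natDegree_contract_le {p : ℕ} (hp : p ≠ 0) (f : R[X]) :
    (contract p f).natDegree ≤ f.natDegree / p :=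
  natDegree_le_iff_coeff_eq_zero.2 fun _ hN => by
    rw [coeff_contract hp]
    exact coeff_eq_zero_of_natDegree_lt ((Nat.div_lt_iff_lt_mul (Nat.pos_of_ne_zero hp)).1 hN)

theorem two_mul_eval_contract_two (q : R[X]) (u : R) :
    2 * (contract 2 q).eval (u ^ 2) = q.eval u + q.eval (-u) := by
  induction q using Polynomial.induction_on' with
  | add f g hf hg =>
    rw [contract_add two_ne_zero, eval_add, mul_add, hf, hg, eval_add, eval_add]
    ring
  | monomial n a =>
    rw [contract_monomial two_ne_zero]
    obtain ⟨k, rfl | rfl⟩ := Nat.even_or_odd' n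
    · rw [if_pos (Nat.mul_mod_right 2 k), Nat.mul_div_cancel_left k two_pos, eval_monomial,
        eval_monomial, eval_monomial, ← pow_mul, Even.neg_pow ⟨k, two_mul k⟩]
      ring
    · simp [Odd.neg_pow ⟨k, rfl⟩, Nat.add_mod]

def spreadMoments (p : ℕ) (μ : ℕ → R) (n : ℕ) : R :=
  if n % p = 0 then μ (n / p) else 0

theorem momentFunctional_spreadMoments {p : ℕ} (hp : p ≠ 0) (μ : ℕ → R) (q : R[X]) :
    momentFunctional (spreadMoments p μ) q = momentFunctional μ (contract p q) := by
  induction q using Polynomial.induction_on' with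
  | add f g hf hg => rw [map_add, hf, hg, contract_add hp, map_add]
  | monomial n a =>
    rw [contract_monomial hp, momentFunctional_monomial, spreadMoments]
    split_ifs <;> simp

theorem sq_X_sub_C_dvd_of_nonneg {q : ℝ[X]} (hq : ∀ x, 0 ≤ q.eval x) {r : ℝ} (hr : q.IsRoot r) :
    (X - C r) ^ 2 ∣ q := by
  rcases eq_or_ne q 0 with rfl | hq0
  · exact dvd_zero _
  have hmin : IsLocalMin (fun x => q.eval x) r :=
    Filter.Eventually.of_forall fun y => by simpa [hr.eq_zero] using hq y
  have hder : (derivative q).IsRoot r := by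
    simpa only [Polynomial.deriv, IsRoot.def] using hmin.deriv_eq_zero
  rw [← le_rootMultiplicity_iff hq0]
  exact (one_lt_rootMultiplicity_iff_isRoot hq0).2 ⟨hr, hder⟩

theorem exists_sq_add_sq_dvd_of_nonneg {q : ℝ[X]} (hq : ∀ x, 0 ≤ q.eval x)
    (hdeg : 0 < q.natDegree) : ∃ c e : ℝ, (X - C c) ^ 2 + C e ^ 2 ∣ q := by
  by_cases hreal : ∃ r, q.IsRoot r
  · obtain ⟨r, hr⟩ := hreal
    exact ⟨r, 0, by simpa using sq_X_sub_C_dvd_of_nonneg hq hr⟩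
  obtain ⟨z, hz⟩ := Complex.exists_root (f := q.map (algebraMap ℝ ℂ)) (by
    rwa [degree_map, ← natDegree_pos_iff_degree_pos])
  have hz0 : aeval z q = 0 := by rwa [IsRoot, eval_map_algebraMap] at hz
  have him : z.im ≠ 0 := by
    intro him
    refine hreal ⟨z.re, ?_⟩
    have hzre : z = algebraMap ℝ ℂ z.re := Complex.ext rfl (by simp [him])
    rw [hzre, aeval_algebraMap_apply, coe_aeval_eq_eval] at hz0
    exact Complex.ofReal_eq_zero.1 hz0
  refine ⟨z.re, z.im, ?_⟩
  convert quadratic_dvd_of_aeval_eq_zero_im_ne_zero q hz0 him using 1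
  rw [Complex.sq_norm, Complex.normSq_apply]
  simp only [map_add, map_mul, map_ofNat]
  ring

theorem eval_nonneg_of_sq_add_sq_mul {c e : ℝ} {q : ℝ[X]}
    (hq : ∀ x, 0 ≤ (((X - C c) ^ 2 + C e ^ 2) * q).eval x) (x : ℝ) : 0 ≤ q.eval x := by
  have hne : ({c}ᶜ : Set ℝ) ⊆ {y | 0 ≤ q.eval y} := fun y hy => by
    have hpos : 0 < (y - c) ^ 2 + e ^ 2 :=
      add_pos_of_pos_of_nonneg (sq_pos_of_ne_zero (sub_ne_zero.2 hy)) (sq_nonneg e)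
    have := hq y
    rw [eval_mul] at this
    simp only [eval_add, eval_pow, eval_sub, eval_X, eval_C] at this
    exact nonneg_of_mul_nonneg_right this hpos
  have hclosed : IsClosed {y | 0 ≤ q.eval y} := isClosed_le continuous_const q.continuous
  exact hclosed.closure_subset_iff.2 hne ((dense_compl_singleton c).closure_eq ▸ Set.mem_univ x)

theorem exists_sq_add_sq_of_natDegree_eq_zero (n : ℕ) {q : ℝ[X]} (hdeg : q.natDegree = 0)
    (hq : 0 ≤ q.eval 0) :
    ∃ a b : ℝ[X], a.natDegree ≤ n ∧ b.natDegree ≤ n ∧ q = a ^ 2 + b ^ 2 := by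
  rw [eq_C_of_natDegree_eq_zero hdeg, eval_C] at hq
  refine ⟨C (Real.sqrt (q.coeff 0)), 0, (natDegree_C _).trans_le n.zero_le,
    natDegree_zero.trans_le n.zero_le, ?_⟩
  rw [← C_pow, Real.sq_sqrt hq, zero_pow two_ne_zero, add_zero, ← eq_C_of_natDegree_eq_zero hdeg]

theorem exists_sq_add_sq_of_nonneg (n : ℕ) {q : ℝ[X]} (hdeg : q.natDegree ≤ 2 * n)
    (hq : ∀ x, 0 ≤ q.eval x) :
    ∃ a b : ℝ[X], a.natDegree ≤ n ∧ b.natDegree ≤ n ∧ q = a ^ 2 + b ^ 2 := by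
  induction n generalizing q with
  | zero => exact exists_sq_add_sq_of_natDegree_eq_zero 0 (by omega) (hq 0)
  | succ n ih =>
    rcases Nat.eq_zero_or_pos q.natDegree with h0 | hpos
    · exact exists_sq_add_sq_of_natDegree_eq_zero _ h0 (hq 0)
    obtain ⟨c, e, q', rfl⟩ := exists_sq_add_sq_dvd_of_nonneg hq hpos
    have hd : ((X - C c) ^ 2 + C e ^ 2).natDegree = 2 := by
      rw [← C_pow, natDegree_add_C, (monic_X_sub_C c).natDegree_pow, natDegree_X_sub_C]
    have hq'0 : q' ≠ 0 := by
      rintro rfl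
      rw [mul_zero, natDegree_zero] at hpos
      exact hpos.false
    rw [natDegree_mul (ne_zero_of_natDegree_gt (n := 0) (by omega)) hq'0, hd] at hdeg
    obtain ⟨a, b, ha, hb, rfl⟩ := ih (by omega) (eval_nonneg_of_sq_add_sq_mul hq)
    have hlin (r : ℝ) {f g : ℝ[X]} (hf : f.natDegree ≤ n) (hg : g.natDegree ≤ n) :
        ((X - C c) * f + C r * g).natDegree ≤ n + 1 :=
      natDegree_add_le_of_degree_le
        ((natDegree_mul_le_of_le (natDegree_X_sub_C_le c) hf).trans (by omega))
        ((natDegree_C_mul_le _ _).trans (hg.trans n.le_succ))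
    -- Brahmagupta–Fibonacci identity
    refine ⟨(X - C c) * a + C (-e) * b, (X - C c) * b + C e * a, hlin _ ha hb, hlin _ hb ha, ?_⟩
    rw [C_neg]
    ring

end Polynomial

namespace Matrix

def hankel {R : Type*} (t : ℕ → R) (n : ℕ) : Matrix (Fin n) (Fin n) R :=
  of fun i j => t (i + j)

theorem dotProduct_mulVec_hankel {R : Type*} [CommRing R] (t : ℕ → R) {n : ℕ} (y : Fin n → R) :
    y ⬝ᵥ hankel t n *ᵥ y = momentFunctional t ((∑ i : Fin n, monomial (i : ℕ) (y i)) ^ 2) := by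
  rw [sq, sum_mul_sum]
  simp only [monomial_mul_monomial, map_sum, momentFunctional_monomial, dotProduct,
    mulVec, hankel, of_apply, mul_sum]
  refine sum_congr rfl fun i _ => sum_congr rfl fun j _ => ?_
  ring

theorem posSemidef_hankel_iff (t : ℕ → ℝ) (m : ℕ) :
    (hankel t (m + 1)).PosSemidef ↔
      ∀ D : ℝ[X], D.natDegree ≤ m → 0 ≤ momentFunctional t (D ^ 2) := by
  have hherm : (hankel t (m + 1)).IsHermitian :=
    ext fun i j => by simp [hankel, add_comm]
  simp only [posSemidef_iff_dotProduct_mulVec, star_trivial, dotProduct_mulVec_hankel,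
    hherm, true_and]
  constructor
  · intro h D hD
    have hDsum : D = ∑ i : Fin (m + 1), monomial i (D.coeff i) := by
      rw [Fin.sum_univ_eq_sum_range (fun i => monomial i (D.coeff i))]
      exact as_sum_range' D _ (Nat.lt_succ_of_le hD)
    simpa only [← hDsum] using h fun i => D.coeff i
  · exact fun h y => h _ (natDegree_sum_le_of_forall_le _ _ fun i _ =>
      (natDegree_monomial_le _).trans (Nat.lt_succ_iff.1 i.isLt))

end Matrix

theorem momentFunctional_nonneg_iff_posSemidef_hankel (μ : ℕ → ℝ) (m : ℕ) :
    (∀ P : ℝ[X], P.natDegree ≤ m → (∀ x : ℝ, 0 ≤ x → 0 ≤ P.eval x) →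
        0 ≤ momentFunctional μ P) ↔
      (Matrix.hankel (spreadMoments 2 μ) (m + 1)).PosSemidef := by
  rw [Matrix.posSemidef_hankel_iff]
  constructor
  · intro h D hD
    rw [momentFunctional_spreadMoments two_ne_zero]
    refine h _ ((natDegree_contract_le two_ne_zero _).trans ?_) fun x hx => ?_
    · exact Nat.div_le_of_le_mul (natDegree_pow_le_of_le 2 hD)
    · have h2 := two_mul_eval_contract_two (D ^ 2) (Real.sqrt x)
      rw [Real.sq_sqrt hx, eval_pow, eval_pow] at h2
      exact nonneg_of_mul_nonneg_right (by rw [h2]; positivity) two_pos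
  · intro h P hP hPnonneg
    obtain ⟨a, b, ha, hb, hab⟩ := exists_sq_add_sq_of_nonneg m (q := expand ℝ 2 P)
      (by rw [natDegree_expand]; omega) fun u => by
        rw [expand_eval]; exact hPnonneg _ (sq_nonneg u)
    have hP := congrArg (momentFunctional (spreadMoments 2 μ)) hab
    rw [momentFunctional_spreadMoments two_ne_zero, contract_expand (p := 2) two_ne_zero,
      map_add] at hP
    rw [hP]
    exact add_nonneg (h a ha) (h b hb)

noncomputable def laguerreMoment (s : ℕ → ℝ) (l : ℕ) : ℝ :=
  ∑ k ∈ range (l + 1), s k * (l.choose k : ℝ) * (l.factorial : ℝ)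

noncomputable def signedLaguerrePoly (k : ℕ) : ℝ[X] :=
  scaleCoeff (fun n => (n ! : ℝ)⁻¹) ((X - C 1) ^ k)

theorem natDegree_signedLaguerrePoly_le (k : ℕ) : (signedLaguerrePoly k).natDegree ≤ k := by
  rw [signedLaguerrePoly, sub_eq_add_neg, ← C_neg]
  exact (natDegree_scaleCoeff_le _ _).trans (natDegree_pow_X_add_C k _).le

theorem laguerreFun_eq_eval (k : ℕ) (x : ℝ) :
    laguerreFun k x = (signedLaguerrePoly k).eval x * Real.exp (-x / 2) := by
  have hcoeff (l : ℕ) : ((X - C 1 : ℝ[X]) ^ k).coeff l = (-1) ^ (k - l) * k.choose l := by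
    rw [← coeff_X_add_C_pow, C_neg, sub_eq_add_neg]
  rw [laguerreFun, laguerreL, eval_eq_sum_range' (Nat.lt_succ_of_le
    (natDegree_signedLaguerrePoly_le k)), mul_sum, sum_mul, sum_mul]
  refine sum_congr rfl fun l hl => ?_
  have hlk : l ≤ k := Nat.lt_succ_iff.1 (mem_range.1 hl)
  have hsign : (-1 : ℝ) ^ k * (-1) ^ l = (-1) ^ (k - l) := by
    rw [← Nat.sub_add_cancel hlk, pow_add, mul_assoc, ← mul_pow]
    norm_num
  rw [signedLaguerrePoly, coeff_scaleCoeff, hcoeff, ← hsign]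
  ring

theorem momentFunctional_laguerreMoment_scaleCoeff (s : ℕ → ℝ) (p : ℝ[X]) :
    momentFunctional (laguerreMoment s) (scaleCoeff (fun n => (n ! : ℝ)⁻¹) p) =
      momentFunctional s (taylor 1 p) := by
  suffices momentFunctional (laguerreMoment s) ∘ₗ scaleCoeff (fun n => (n ! : ℝ)⁻¹) =
      momentFunctional s ∘ₗ taylor 1 from LinearMap.congr_fun this p
  refine lhom_ext' fun l => LinearMap.ext fun a => ?_
  have hdeg : (C a * (X + C 1 : ℝ[X]) ^ l).natDegree < l + 1 :=
    Nat.lt_succ_of_le ((natDegree_C_mul_le _ _).trans (natDegree_pow_X_add_C l 1).le)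
  simp only [LinearMap.comp_apply, scaleCoeff_monomial, momentFunctional_monomial,
    taylor_monomial, momentFunctional_eq_sum_range s hdeg, coeff_C_mul, coeff_X_add_C_pow,
    laguerreMoment, one_pow, sum_mul]
  refine sum_congr rfl fun k _ => ?_
  field_simp

theorem momentFunctional_signedLaguerrePoly (s : ℕ → ℝ) (k : ℕ) :
    momentFunctional (laguerreMoment s) (signedLaguerrePoly k) = s k := by
  rw [signedLaguerrePoly, momentFunctional_laguerreMoment_scaleCoeff, taylor_pow, map_sub,
    taylor_X, taylor_C, add_sub_cancel_right, ← monomial_one_right_eq_X_pow,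
    momentFunctional_monomial, mul_one]

theorem exists_eq_sum_signedLaguerrePoly {m : ℕ} {P : ℝ[X]} (hP : P.natDegree ≤ m) :
    ∃ g : ℕ → ℝ, P = ∑ k ∈ range (m + 1), g k • signedLaguerrePoly k := by
  set Q := scaleCoeff (fun n => (n ! : ℝ)) P
  have hPQ : P = scaleCoeff (fun n => (n ! : ℝ)⁻¹) Q := by
    ext n
    rw [coeff_scaleCoeff, coeff_scaleCoeff, inv_mul_cancel_left₀ (by positivity)]
  have hQ : Q = ∑ k ∈ range (m + 1), C ((taylor 1 Q).coeff k) * (X - C 1) ^ k := by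
    conv_lhs => rw [← sum_taylor_eq Q 1]
    refine sum_over_range' _ (fun _ => by simp) _ ?_
    rw [natDegree_taylor]
    exact Nat.lt_succ_of_le ((natDegree_scaleCoeff_le _ _).trans hP)
  refine ⟨fun k => (taylor 1 Q).coeff k, ?_⟩
  conv_lhs => rw [hPQ, hQ]
  simp only [map_sum, C_mul', map_smul, signedLaguerrePoly]

theorem sum_mul_laguerreFun (g : ℕ → ℝ) (n : ℕ) (x : ℝ) :
    ∑ k ∈ range n, g k * laguerreFun k x =
      (∑ k ∈ range n, g k • signedLaguerrePoly k).eval x * Real.exp (-x / 2) := by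
  simp only [laguerreFun_eq_eval, eval_finsetSum, eval_smul, smul_eq_mul, sum_mul, mul_assoc]

theorem momentFunctional_sum_signedLaguerrePoly (s g : ℕ → ℝ) (n : ℕ) :
    momentFunctional (laguerreMoment s) (∑ k ∈ range n, g k • signedLaguerrePoly k) =
      ∑ k ∈ range n, s k * g k := by
  simp only [map_sum, map_smul, momentFunctional_signedLaguerrePoly, smul_eq_mul, mul_comm]

theorem laguerre_pairing_nonneg_iff (m : ℕ) (s : ℕ → ℝ) :
    (∀ g : ℕ → ℝ, (∀ x : ℝ, 0 ≤ x → 0 ≤ ∑ k ∈ range (m + 1), g k * laguerreFun k x) →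
        0 ≤ ∑ k ∈ range (m + 1), s k * g k) ↔
      ∀ P : ℝ[X], P.natDegree ≤ m → (∀ x : ℝ, 0 ≤ x → 0 ≤ P.eval x) →
        0 ≤ momentFunctional (laguerreMoment s) P := by
  constructor
  · intro h P hP hPnonneg
    obtain ⟨g, rfl⟩ := exists_eq_sum_signedLaguerrePoly hP
    rw [momentFunctional_sum_signedLaguerrePoly]
    refine h g fun x hx => ?_
    rw [sum_mul_laguerreFun]
    exact mul_nonneg (hPnonneg x hx) (Real.exp_pos _).le
  · intro h g hg
    rw [← momentFunctional_sum_signedLaguerrePoly]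
    refine h _ (natDegree_sum_le_of_forall_le _ _ fun k hk => ?_) fun x hx => ?_
    · exact (natDegree_smul_le _ _).trans ((natDegree_signedLaguerrePoly_le k).trans
        (Nat.lt_succ_iff.1 (mem_range.1 hk)))
    · have := hg x hx
      rw [sum_mul_laguerreFun] at this
      exact nonneg_of_mul_nonneg_left this (Real.exp_pos _)

/-- the sequence `s` pairs nonnegatively with every truncated Laguerre series
(up to degree `m`) that is nonnegative on `[0, ∞)` iff the associated Laguerre moment
matrix `A` is positive semidefinite. -/
theorem laguerre_pairing_nonneg_iff_moment_matrix_psd (m : ℕ) (s : ℕ → ℝ)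
    (A : Matrix (Fin (m + 1)) (Fin (m + 1)) ℝ)
    (hA : ∀ i j : Fin (m + 1), A i j =
      if (i.val + j.val) % 2 = 0 then
        ∑ k ∈ Finset.range ((i.val + j.val) / 2 + 1),
          s k * (((i.val + j.val) / 2).choose k : ℝ) * (((i.val + j.val) / 2).factorial : ℝ)
      else 0) :
    (∀ g : ℕ → ℝ,
        (∀ x : ℝ, 0 ≤ x → 0 ≤ ∑ k ∈ Finset.range (m + 1), g k * laguerreFun k x) →
        0 ≤ ∑ k ∈ Finset.range (m + 1), s k * g k) ↔ A.PosSemidef := by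
  have hA' : A = Matrix.hankel (spreadMoments 2 (laguerreMoment s)) (m + 1) := Matrix.ext hA
  rw [hA', laguerre_pairing_nonneg_iff, momentFunctional_nonneg_iff_posSemidef_hankel]
end

section
/- Let m ≥ n ≥ 1 be integers. Define the (m+1)×(m+1) diagonal matrix Q with Q_{kk} = 1/((2^{m+1} − 1) · k!) for 0 ≤ k ≤ m, and the vector F ∈ ℝ^{m+1} with F_k = C(m+1, k+1)/(2^{m+1} − 1) for 0 ≤ k ≤ m. Then: Q is positive definite; F_k > 0 for all 0 ≤ k ≤ m; ∑_{k=0}^{m} F_k = 1; for every l with 1 ≤ l ≤ m, ∑_{i+j=2l−1, 0≤i,j≤m} Q_{ij} = 0; and for every l with 0 ≤ l ≤ m, ∑_{i+j=2l, 0≤i,j≤m} Q_{ij} = ∑_{k=l}^{m} ((−1)^{k+l}/l!) · C(k,l) · F_k. In particular (Q, F) is a strictly feasible solution of the semidefinite program (SDP^{m,≤}_n). -/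
/-!
`Q` is diagonal, so the odd antidiagonal sums vanish and the even one for `2l` is `Q_{ll}`.
The even constraint thus reduces to `∑_{k=l}^{m} (-1)^{k+l} C(k,l) C(m+1,k+1) = 1`: expand
`C(m+1,k+1) = ∑_{j=k}^{m} C(j,k)` (hockey stick), exchange the sums and use the orthogonality
`∑_{k=l}^{j} (-1)^{k+l} C(k,l) C(j,k) = δ_{lj}`. The normalisation `∑ F_k = 1` is
`∑_{k ≥ 1} C(m+1,k) = 2^{m+1} - 1`.
-/

open Finset

theorem sum_Icc_neg_one_pow_mul_choose_mul_choose (l n : ℕ) :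
    ∑ k ∈ Icc l n, (-1 : ℤ) ^ (k + l) * k.choose l * n.choose k = if l = n then 1 else 0 := by
  rcases lt_or_ge n l with hnl | hln
  · rw [Icc_eq_empty_of_lt hnl, sum_empty, if_neg hnl.ne']
  have hterm : ∀ k ∈ range (n + 1 - l),
      (-1 : ℤ) ^ (l + k + l) * (l + k).choose l * n.choose (l + k)
        = n.choose l * ((-1) ^ k * (n - l).choose k) := by
    intro k _
    have hc : (n.choose (l + k) : ℤ) * (l + k).choose l = n.choose l * (n - l).choose k := by
      have := Nat.choose_mul (n := n) (Nat.le_add_right l k)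
      rw [Nat.add_sub_cancel_left] at this
      exact_mod_cast this
    rw [show l + k + l = k + 2 * l by ring, pow_add, pow_mul, neg_one_sq, one_pow, mul_one]
    linear_combination (-1 : ℤ) ^ k * hc
  rw [← Ico_add_one_right_eq_Icc, sum_Ico_eq_sum_range, sum_congr rfl hterm, ← mul_sum,
    show n + 1 - l = n - l + 1 by omega, Int.alternating_sum_range_choose]
  rcases hln.eq_or_lt with rfl | hlt
  · simp
  · simp [hlt.ne, Nat.sub_ne_zero_of_lt hlt]

theorem sum_Icc_neg_one_pow_mul_choose_mul_choose_succ {l m : ℕ} (hlm : l ≤ m) :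
    ∑ k ∈ Icc l m, (-1 : ℤ) ^ (k + l) * k.choose l * (m + 1).choose (k + 1) = 1 := by
  simp_rw [← Nat.sum_Icc_choose, Nat.cast_sum, mul_sum]
  rw [sum_comm' (t' := Icc l m) (s' := fun j => Icc l j)
    (by intro k j; simp only [mem_Icc]; omega)]
  simp_rw [sum_Icc_neg_one_pow_mul_choose_mul_choose, sum_ite_eq, mem_Icc, le_refl, hlm,
    and_self, if_true]

theorem sum_range_choose_succ_eq_two_pow_sub_one (m : ℕ) :
    ∑ k ∈ range (m + 1), ((m + 1).choose (k + 1) : ℝ) = 2 ^ (m + 1) - 1 := by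
  have h : ((∑ k ∈ range (m + 1), (m + 1).choose (k + 1) + (m + 1).choose 0 : ℕ) : ℝ)
      = 2 ^ (m + 1) := by
    rw [← sum_range_succ']
    exact_mod_cast Nat.sum_range_choose (m + 1)
  push_cast [Nat.choose_zero_right] at h
  linarith

theorem Matrix.sum_sum_ite_val_add_diagonal {R : Type*} [AddCommMonoid R] {N : ℕ}
    (d : Fin N → R) (s : ℕ) :
    ∑ i : Fin N, ∑ j : Fin N, (if i.val + j.val = s then Matrix.diagonal d i j else 0)
      = ∑ i : Fin N, if 2 * i.val = s then d i else 0 := by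
  refine sum_congr rfl fun i _ => ?_
  rw [sum_eq_single i (fun j _ hji => by simp [Matrix.diagonal_apply_ne _ hji.symm]) (by simp)]
  simp [two_mul]

theorem strictly_feasible_solution_restriction_general (m : ℕ)
    (Q : Matrix (Fin (m + 1)) (Fin (m + 1)) ℝ) (F : ℕ → ℝ)
    (hQ : Q = Matrix.diagonal (fun k : Fin (m + 1) =>
      1 / (((2 : ℝ) ^ (m + 1) - 1) * (k.val.factorial : ℝ))))
    (hF : ∀ k ≤ m, F k = ((m + 1).choose (k + 1) : ℝ) / ((2 : ℝ) ^ (m + 1) - 1)) :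
    Q.PosDef ∧
    (∀ k ≤ m, 0 < F k) ∧
    (∑ k ∈ Finset.range (m + 1), F k) = 1 ∧
    (∀ l, 1 ≤ l → l ≤ m →
      (∑ i : Fin (m + 1), ∑ j : Fin (m + 1),
        if i.val + j.val = 2 * l - 1 then Q i j else 0) = 0) ∧
    (∀ l ≤ m,
      (∑ i : Fin (m + 1), ∑ j : Fin (m + 1),
        if i.val + j.val = 2 * l then Q i j else 0)
      = ∑ k ∈ Finset.Icc l m,
          ((-1 : ℝ) ^ (k + l) / (l.factorial : ℝ)) * (k.choose l : ℝ) * F k) := by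
  have hc : 0 < (2 : ℝ) ^ (m + 1) - 1 := by
    linarith [one_lt_pow₀ (one_lt_two (α := ℝ)) (show m + 1 ≠ 0 by omega)]
  subst hQ
  refine ⟨Matrix.PosDef.diagonal fun i => by positivity, fun k hk => ?_, ?_, fun l hl _ => ?_,
    fun l hl => ?_⟩
  · rw [hF k hk]
    have := Nat.choose_pos (show k + 1 ≤ m + 1 by omega)
    positivity
  · rw [sum_congr rfl fun k hk => hF k (Nat.lt_succ_iff.mp (mem_range.mp hk)), ← sum_div,
      sum_range_choose_succ_eq_two_pow_sub_one, div_self hc.ne']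
  · rw [Matrix.sum_sum_ite_val_add_diagonal]
    exact sum_eq_zero fun i _ => if_neg (by omega)
  · have hbinom :
        ∑ k ∈ Icc l m, (-1 : ℝ) ^ (k + l) * k.choose l * (m + 1).choose (k + 1) = 1 := by
      exact_mod_cast sum_Icc_neg_one_pow_mul_choose_mul_choose_succ hl
    rw [Matrix.sum_sum_ite_val_add_diagonal, sum_eq_single ⟨l, by omega⟩ (fun i _ hi => if_neg
      fun h => hi (Fin.ext (by dsimp only; omega))) (by simp), if_pos rfl]
    calc 1 / (((2 : ℝ) ^ (m + 1) - 1) * l.factorial)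
        = 1 / (((2 : ℝ) ^ (m + 1) - 1) * l.factorial) *
            ∑ k ∈ Icc l m, (-1 : ℝ) ^ (k + l) * k.choose l * (m + 1).choose (k + 1) := by
          rw [hbinom, mul_one]
      _ = _ := by
          rw [mul_sum]
          refine sum_congr rfl fun k hk => ?_
          rw [hF k (mem_Icc.mp hk).2]
          field_simp

/-- the explicit pair `(Q, F)` (diagonal matrix with entries
`1/((2^{m+1}−1) k!)` and vector `F_k = C(m+1,k+1)/(2^{m+1}−1)`) is a strictly feasible
solution of the semidefinite program `(SDP^{m,≤}_n)`. -/
theorem strictly_feasible_solution_restriction (m n : ℕ) (hn : 1 ≤ n) (hmn : n ≤ m)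
    (Q : Matrix (Fin (m + 1)) (Fin (m + 1)) ℝ) (F : ℕ → ℝ)
    (hQ : Q = Matrix.diagonal (fun k : Fin (m + 1) =>
      1 / (((2 : ℝ) ^ (m + 1) - 1) * (k.val.factorial : ℝ))))
    (hF : ∀ k ≤ m, F k = ((m + 1).choose (k + 1) : ℝ) / ((2 : ℝ) ^ (m + 1) - 1)) :
    Q.PosDef ∧
    (∀ k ≤ m, 0 < F k) ∧
    (∑ k ∈ Finset.range (m + 1), F k) = 1 ∧
    (∀ l, 1 ≤ l → l ≤ m →
      (∑ i : Fin (m + 1), ∑ j : Fin (m + 1),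
        if i.val + j.val = 2 * l - 1 then Q i j else 0) = 0) ∧
    (∀ l ≤ m,
      (∑ i : Fin (m + 1), ∑ j : Fin (m + 1),
        if i.val + j.val = 2 * l then Q i j else 0)
      = ∑ k ∈ Finset.Icc l m,
          ((-1 : ℝ) ^ (k + l) / (l.factorial : ℝ)) * (k.choose l : ℝ) * F k) :=
  strictly_feasible_solution_restriction_general m Q F hQ hF
end

section
/- For all integers m ≥ n ≥ 1, strong duality holds between the semidefinite programs (SDP^{m,≥}_n) and (D-SDP^{m,≥}_n): the supremum of F_n over all feasible pairs (A, F) of the primal program equals the infimum of y over all feasible triples (Q, μ, y) of the dual program. -/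
/-!
Feasible primal points are the weight vectors `x` in the standard simplex whose moment matrix
`∑ₖ xₖ Mₖ` is positive semidefinite, and after binomial inversion the dual constraint says exactly
`μₖ = ⟪Q, Mₖ⟫`, where `⟪Q, A⟫ = ∑ᵢⱼ Qᵢⱼ Aᵢⱼ`. Weak duality is then
`0 ≤ ⟪Q, ∑ₖ xₖ Mₖ⟫ = ∑ₖ xₖ μₖ`. Conversely, for any `t` above the primal value the compact convex
image of the simplex under `x ↦ (∑ₖ xₖ Mₖ, xₙ)` is disjoint from the closed convex set
`PSD × [t, ∞)`; a separating functional, restricted to matrices, rescaled and symmetrised, is a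
dual matrix `Q` of value below `t`. The rescaling is possible because the vertex `e_m` is
feasible: `M_m = diag(0, …, 0, m!)`.
-/

open Finset Matrix
open scoped ComplexOrder Nat

instance Matrix.instLocallyConvexSpace {m n 𝕜 E : Type*} [Semiring 𝕜] [PartialOrder 𝕜]
    [AddCommMonoid E] [TopologicalSpace E] [Module 𝕜 E] [LocallyConvexSpace 𝕜 E] :
    LocallyConvexSpace 𝕜 (Matrix m n E) :=
  inferInstanceAs (LocallyConvexSpace 𝕜 (m → n → E))

lemma nonneg_of_forall_nonneg_lt_add_mul {w a b : ℝ} (h : ∀ s : ℝ, 0 ≤ s → w < a + s * b) :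
    0 ≤ b := by
  by_contra! hb
  have ha := h 0 le_rfl
  have := h ((a - w) / -b) (div_nonneg (by linarith) (by linarith))
  rw [div_mul_eq_mul_div, div_neg, mul_div_cancel_right₀ _ hb.ne] at this
  linarith

theorem exists_lagrangian_lt_of_forall_lt {X E : Type*}
    [AddCommGroup X] [Module ℝ X] [TopologicalSpace X]
    [AddCommGroup E] [Module ℝ E] [TopologicalSpace E] [IsTopologicalAddGroup E]
    [ContinuousSMul ℝ E] [LocallyConvexSpace ℝ E]
    {K : Set X} (hKconv : Convex ℝ K) (hKcomp : IsCompact K)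
    {P : Set E} (hPconv : Convex ℝ P) (hPclosed : IsClosed P)
    (hPsmul : ∀ p ∈ P, ∀ s : ℝ, 0 ≤ s → s • p ∈ P)
    (Φ : X →L[ℝ] E) (c : X →L[ℝ] ℝ) {x₀ : X} (hx₀K : x₀ ∈ K) (hx₀P : Φ x₀ ∈ P) {t : ℝ}
    (ht : ∀ x ∈ K, Φ x ∈ P → c x < t) :
    ∃ g : E →L[ℝ] ℝ, (∀ p ∈ P, 0 ≤ g p) ∧ ∀ x ∈ K, c x + g (Φ x) < t := by
  have hdisj : Disjoint (Φ.prod c '' K) (P ×ˢ Set.Ici t) := by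
    rw [Set.disjoint_left]
    rintro _ ⟨x, hx, rfl⟩ ⟨hxP, hxt⟩
    exact (ht x hx hxP).not_ge hxt
  obtain ⟨f, u, w, hfK, huw, hfP⟩ := geometric_hahn_banach_compact_closed
    (hKconv.linear_image (Φ.prod c).toLinearMap) (hKcomp.image (Φ.prod c).continuous)
    (hPconv.prod (convex_Ici t)) (hPclosed.prod isClosed_Ici) hdisj
  set g := f.comp (ContinuousLinearMap.inl ℝ E ℝ)
  set α := f (0, 1)
  have hf : ∀ p r, f (p, r) = g p + r * α := by
    intro p r
    have : ((p, r) : E × ℝ) = (p, 0) + r • (0, 1) := by simp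
    rw [this, map_add, map_smul, smul_eq_mul]
    rfl
  have h0 : (0 : E) ∈ P := by simpa using hPsmul _ hx₀P 0 le_rfl
  have hα : 0 ≤ α := by
    refine nonneg_of_forall_nonneg_lt_add_mul (w := w) (a := g 0 + t * α) fun s hs => ?_
    have := hfP (0, t + s) ⟨h0, by simp [hs]⟩
    rw [hf, add_mul] at this
    linarith
  have hg : ∀ p ∈ P, 0 ≤ g p := by
    intro p hp
    refine nonneg_of_forall_nonneg_lt_add_mul (w := w) (a := t * α) fun s hs => ?_
    have := hfP (s • p, t) ⟨hPsmul p hp s hs, Set.mem_Ici.2 le_rfl⟩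
    rw [hf, map_smul, smul_eq_mul] at this
    linarith
  have hK : ∀ x ∈ K, g (Φ x) + c x * α < t * α := fun x hx => by
    have h1 := hfK (Φ x, c x) ⟨x, hx, rfl⟩
    have h2 := hfP (0, t) ⟨h0, Set.mem_Ici.2 le_rfl⟩
    rw [hf] at h1 h2
    rw [map_zero, zero_add] at h2
    linarith
  have hαpos : 0 < α := by
    refine hα.lt_of_ne fun hα0 => ?_
    have := hK x₀ hx₀K
    rw [← hα0, mul_zero, mul_zero, add_zero] at this
    exact (hg _ hx₀P).not_gt this
  refine ⟨α⁻¹ • g, fun p hp => ?_, fun x hx => ?_⟩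
  · simpa using mul_nonneg (inv_nonneg.2 hα) (hg p hp)
  · have := hK x hx
    rw [_root_.smul_apply, smul_eq_mul, ← mul_lt_mul_iff_of_pos_right hαpos, add_mul, mul_comm α⁻¹,
      mul_assoc, inv_mul_cancel₀ hαpos.ne', mul_one]
    linarith

theorem csSup_eq_csInf_of_forall_le_of_forall_lt_mem {S T : Set ℝ} (hS : S.Nonempty)
    (hSbdd : BddAbove S) (hST : ∀ s ∈ S, ∀ t ∈ T, s ≤ t) (hT : ∀ t, (∀ s ∈ S, s < t) → t ∈ T) :
    sSup S = sInf T := by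
  have hTne : T.Nonempty :=
    ⟨sSup S + 1, hT _ fun s hs => (le_csSup hSbdd hs).trans_lt (lt_add_one _)⟩
  refine le_antisymm (csSup_le hS fun s hs => le_csInf hTne (hST s hs)) ?_
  refine le_of_forall_pos_le_add fun ε hε => csInf_le ⟨hS.some, hST _ hS.some_mem⟩ ?_
  exact hT _ fun s hs => (le_csSup hSbdd hs).trans_lt (lt_add_of_pos_right _ hε)

lemma Matrix.PosSemidef.sum_mul_nonneg {n 𝕜 : Type*} [Fintype n] [RCLike 𝕜] {Q A : Matrix n n 𝕜}
    (hQ : Q.PosSemidef) (hA : A.PosSemidef) : 0 ≤ ∑ i, ∑ j, Q i j * A i j := by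
  simpa [dotProduct, mulVec] using (hQ.hadamard hA).dotProduct_mulVec_nonneg (fun _ => 1)

lemma isClosed_setOf_posSemidef {n 𝕜 : Type*} [Fintype n] [RCLike 𝕜] :
    IsClosed {A : Matrix n n 𝕜 | A.PosSemidef} := by
  simp only [posSemidef_iff_dotProduct_mulVec, Set.ofPred_and, Set.ofPred_forall]
  refine (isClosed_eq continuous_id.matrix_conjTranspose continuous_id).inter
    (isClosed_iInter fun x => isClosed_le continuous_const ?_)
  exact continuous_const.dotProduct (continuous_id.matrix_mulVec continuous_const)

lemma convex_setOf_posSemidef {n 𝕜 : Type*} [Fintype n] [RCLike 𝕜] :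
    Convex ℝ {A : Matrix n n 𝕜 | A.PosSemidef} :=
  fun _ hA _ hB _ _ ha hb _ => (hA.smul ha).add (hB.smul hb)

lemma exists_posSemidef_forall_isSymm_eq {n : Type*} [Fintype n] [DecidableEq n]
    (g : Matrix n n ℝ →ₗ[ℝ] ℝ) (hg : ∀ A : Matrix n n ℝ, A.PosSemidef → 0 ≤ g A) :
    ∃ Q : Matrix n n ℝ, Q.PosSemidef ∧ ∀ A : Matrix n n ℝ, A.IsSymm →
      g A = ∑ i, ∑ j, Q i j * A i j := by
  set Q₀ : Matrix n n ℝ := of fun i j => g (single i j 1)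
  have hQ₀ : ∀ A, g A = ∑ i, ∑ j, Q₀ i j * A i j := by
    intro A
    conv_lhs => rw [matrix_eq_sum_single A]
    simp only [map_sum]
    refine sum_congr rfl fun i _ => sum_congr rfl fun j _ => ?_
    have : single i j (A i j) = A i j • single i j 1 := by rw [smul_single, smul_eq_mul, mul_one]
    rw [this, map_smul, smul_eq_mul, mul_comm]
    rfl
  have hQ₀T : ∀ A : Matrix n n ℝ, A.IsSymm → ∑ i, ∑ j, Q₀ᵀ i j * A i j = g A := by
    intro A hA
    rw [hQ₀, Finset.sum_comm]
    simp [← hA.apply]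
  set Q : Matrix n n ℝ := (2⁻¹ : ℝ) • (Q₀ + Q₀ᵀ)
  have hQ : ∀ A : Matrix n n ℝ, A.IsSymm → g A = ∑ i, ∑ j, Q i j * A i j := by
    intro A hA
    simp only [Q, Matrix.smul_apply, Matrix.add_apply, smul_eq_mul, add_mul, mul_assoc, ← mul_sum,
      sum_add_distrib, hQ₀T A hA, ← hQ₀]
    ring
  refine ⟨Q, posSemidef_iff_dotProduct_mulVec.2 ⟨?_, fun x => ?_⟩, hQ⟩
  · simp [Q, IsHermitian, add_comm]
  · have hx : (vecMulVec x x).IsSymm := IsSymm.ext fun i j => mul_comm _ _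
    have := hg _ (posSemidef_vecMulVec_self_star x)
    rw [star_trivial, hQ _ hx] at this
    simpa [dotProduct, mulVec, vecMulVec, mul_sum, mul_comm, mul_left_comm, mul_assoc] using this

theorem sum_neg_one_pow_mul_choose_mul_choose {R : Type*} [CommRing R] {N a : ℕ} (ha : a ≤ N)
    (b : ℕ) : ∑ j ∈ range (N + 1), (-1 : R) ^ j * a.choose j * j.choose b =
      if a = b then (-1) ^ a else 0 := by
  rcases lt_or_ge a b with hab | hba
  · rw [if_neg hab.ne]
    refine sum_eq_zero fun j _ => ?_
    rcases le_or_gt j a with hj | hj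
    · simp [Nat.choose_eq_zero_of_lt (hj.trans_lt hab)]
    · simp [Nat.choose_eq_zero_of_lt hj]
  -- the nonzero terms are `b ≤ j ≤ a`, where `C(a,j) C(j,b) = C(a,b) C(a-b,j-b)`
  have hsub : Ico b (a + 1) ⊆ range (N + 1) := fun j hj => by
    simp only [mem_Ico, mem_range] at hj ⊢; omega
  rw [← sum_subset hsub fun j hj hj' => ?_, sum_Ico_eq_sum_range,
    show a + 1 - b = a - b + 1 by omega]
  · have := congrArg (Int.cast : ℤ → R) (Int.alternating_sum_range_choose (n := a - b))
    push_cast at this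
    calc ∑ i ∈ range (a - b + 1), (-1 : R) ^ (b + i) * a.choose (b + i) * (b + i).choose b
        = (-1) ^ b * a.choose b * ∑ i ∈ range (a - b + 1), (-1 : R) ^ i * (a - b).choose i := by
          rw [mul_sum]
          refine sum_congr rfl fun i _ => ?_
          rw [mul_assoc, ← Nat.cast_mul, Nat.choose_mul (by omega), Nat.add_sub_cancel_left,
            pow_add]
          push_cast; ring
      _ = if a = b then (-1) ^ a else 0 := by
          rw [this]
          by_cases hab : a = b
          · subst hab; simp
          · rw [if_neg (by omega), if_neg hab, mul_zero]
  · simp only [mem_Ico, mem_range] at hj hj'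
    rcases lt_or_ge j b with hjb | hjb
    · simp [Nat.choose_eq_zero_of_lt hjb]
    · simp [Nat.choose_eq_zero_of_lt (show a < j by omega)]

theorem binomial_inversion {R : Type*} [CommRing R] {N : ℕ} {a b : ℕ → R} :
    (∀ l ≤ N, b l = ∑ k ∈ range (N + 1), (-1) ^ (k + l) * k.choose l * a k) ↔
      ∀ k ≤ N, a k = ∑ l ∈ range (N + 1), l.choose k * b l := by
  constructor
  · intro h k hk
    calc a k = ∑ k' ∈ range (N + 1), (-1) ^ k' * (if k' = k then (-1) ^ k' else 0) * a k' := by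
          rw [sum_eq_single_of_mem k (mem_range.2 (by omega)) fun k' _ hk' => by simp [hk']]
          simp [← pow_add, ← two_mul, pow_mul]
      _ = ∑ k' ∈ range (N + 1), ∑ l ∈ range (N + 1),
            (-1) ^ k' * ((-1) ^ l * k'.choose l * l.choose k) * a k' := by
          refine sum_congr rfl fun k' hk' => ?_
          rw [← sum_neg_one_pow_mul_choose_mul_choose (mem_range_succ_iff.1 hk'), mul_sum, sum_mul]
      _ = ∑ l ∈ range (N + 1), l.choose k * b l := by
          rw [sum_comm]
          refine sum_congr rfl fun l hl => ?_
          rw [h l (mem_range_succ_iff.1 hl), mul_sum]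
          exact sum_congr rfl fun k' _ => by ring
  · intro h l hl
    calc b l = ∑ l' ∈ range (N + 1), (-1) ^ l * (if l' = l then (-1) ^ l' else 0) * b l' := by
          rw [sum_eq_single_of_mem l (mem_range.2 (by omega)) fun l' _ hl' => by simp [hl']]
          simp [← pow_add, ← two_mul, pow_mul]
      _ = ∑ l' ∈ range (N + 1), ∑ k ∈ range (N + 1),
            (-1) ^ l * ((-1) ^ k * l'.choose k * k.choose l) * b l' := by
          refine sum_congr rfl fun l' hl' => ?_
          rw [← sum_neg_one_pow_mul_choose_mul_choose (mem_range_succ_iff.1 hl'), mul_sum, sum_mul]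
      _ = ∑ k ∈ range (N + 1), (-1) ^ (k + l) * k.choose l * a k := by
          rw [sum_comm]
          refine sum_congr rfl fun k hk => ?_
          rw [h k (mem_range_succ_iff.1 hk), mul_sum]
          exact sum_congr rfl fun l' _ => by ring

def antidiagSum {R : Type*} [AddCommMonoid R] {N : ℕ} (Q : Matrix (Fin N) (Fin N) R) (r : ℕ) : R :=
  ∑ i, ∑ j, if i.val + j.val = r then Q i j else 0

def evenHankel {R : Type*} [Zero R] (N : ℕ) (t : ℕ → R) : Matrix (Fin N) (Fin N) R :=
  of fun i j => if (i.val + j.val) % 2 = 0 then t ((i.val + j.val) / 2) else 0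

lemma isSymm_evenHankel {R : Type*} [Zero R] (N : ℕ) (t : ℕ → R) : (evenHankel N t).IsSymm :=
  IsSymm.ext fun i j => by simp only [evenHankel, of_apply, add_comm]

lemma sum_mul_evenHankel {R : Type*} [NonUnitalNonAssocSemiring R] {N : ℕ}
    (Q : Matrix (Fin N) (Fin N) R) (t : ℕ → R) :
    ∑ i, ∑ j, Q i j * evenHankel N t i j = ∑ l ∈ range N, antidiagSum Q (2 * l) * t l := by
  have hdiag : ∀ i j : Fin N, ∑ l ∈ range N, (if i.val + j.val = 2 * l then Q i j * t l else 0) =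
      Q i j * evenHankel N t i j := by
    intro i j
    simp only [evenHankel, of_apply]
    split_ifs with h
    · rw [sum_eq_single_of_mem ((i.val + j.val) / 2) (mem_range.2 (by omega))
        fun l _ hl => if_neg (by omega), if_pos (by omega)]
    · exact (sum_eq_zero fun l _ => if_neg (by omega)).trans (mul_zero _).symm
  simp only [antidiagSum, sum_mul, ite_mul, zero_mul, ← hdiag]
  exact (sum_congr rfl fun i _ => Finset.sum_comm).trans Finset.sum_comm

/-- `Mₖ`; the primal constraints on `A` say exactly `A = ∑ₖ Fₖ Mₖ`. -/
def momentMatrix (m k : ℕ) : Matrix (Fin (m + 1)) (Fin (m + 1)) ℝ :=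
  evenHankel (m + 1) fun l => l.choose k * l !

def momentMap (m : ℕ) : (Fin (m + 1) → ℝ) →ₗ[ℝ] Matrix (Fin (m + 1)) (Fin (m + 1)) ℝ :=
  Fintype.linearCombination ℝ fun k => momentMatrix m k

/-- The objective values of the feasible points of `(SDP^{m,≥}_n)`. -/
def primalValues (m n : ℕ) : Set ℝ :=
  {v : ℝ | ∃ (A : Matrix (Fin (m + 1)) (Fin (m + 1)) ℝ) (F : ℕ → ℝ),
      A.PosSemidef ∧
      (∑ k ∈ Finset.range (m + 1), F k) = 1 ∧
      (∀ k ≤ m, 0 ≤ F k) ∧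
      (∀ (i j : Fin (m + 1)) (l : ℕ), i.val + j.val = 2 * l →
        A i j = ∑ k ∈ Finset.range (l + 1),
          F k * (l.choose k : ℝ) * (l.factorial : ℝ)) ∧
      (∀ i j : Fin (m + 1), (i.val + j.val) % 2 = 1 → A i j = 0) ∧
      v = F n}

/-- The objective values of the feasible points of `(D-SDP^{m,≥}_n)`. -/
def dualValues (m n : ℕ) : Set ℝ :=
  {y : ℝ | ∃ (Q : Matrix (Fin (m + 1)) (Fin (m + 1)) ℝ) (μ : ℕ → ℝ),
      Q.PosSemidef ∧
      1 + μ n ≤ y ∧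
      (∀ k ≤ m, μ k ≤ y) ∧
      (∀ l ≤ m,
        (∑ i : Fin (m + 1), ∑ j : Fin (m + 1),
          if i.val + j.val = 2 * l then Q i j else 0)
        = ∑ k ∈ Finset.Icc l m,
            ((-1 : ℝ) ^ (k + l) / (l.factorial : ℝ)) * (k.choose l : ℝ) * μ k)}

section

variable {m : ℕ}

lemma momentMap_apply (x : Fin (m + 1) → ℝ) :
    momentMap m x = evenHankel (m + 1) fun l => ∑ k, x k * l.choose k * l ! := by
  ext i j
  simp [momentMap, momentMatrix, Fintype.linearCombination_apply, evenHankel, Matrix.sum_apply,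
    mul_ite, sum_ite_irrel, mul_assoc]

lemma momentMatrix_self_eq_diagonal (m : ℕ) :
    momentMatrix m m = diagonal (Pi.single (Fin.last m) (m ! : ℝ)) := by
  ext i j
  have hi := i.is_le
  have hj := j.is_le
  by_cases h : i = Fin.last m ∧ j = Fin.last m
  · obtain ⟨rfl, rfl⟩ := h
    simp [momentMatrix, evenHankel, ← two_mul]
  · have : (i.val + j.val) / 2 < m := by
      rw [Fin.ext_iff, Fin.ext_iff] at h
      simp only [Fin.val_last] at h
      omega
    rcases eq_or_ne i j with rfl | hij
    · simp_all [momentMatrix, evenHankel, Nat.choose_eq_zero_of_lt this]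
    · simp [momentMatrix, evenHankel, Nat.choose_eq_zero_of_lt this, hij]

lemma posSemidef_momentMatrix_self (m : ℕ) : (momentMatrix m m).PosSemidef := by
  rw [momentMatrix_self_eq_diagonal]
  refine PosSemidef.diagonal fun i => ?_
  by_cases h : i = Fin.last m <;> simp [h]

lemma momentMap_single (k : Fin (m + 1)) : momentMap m (Pi.single k 1) = momentMatrix m k := by
  simp [momentMap]

lemma sum_mul_momentMap (Q : Matrix (Fin (m + 1)) (Fin (m + 1)) ℝ) (x : Fin (m + 1) → ℝ) :
    ∑ i, ∑ j, Q i j * momentMap m x i j = ∑ k, x k * ∑ i, ∑ j, Q i j * momentMatrix m k i j := by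
  simp only [momentMap, Fintype.linearCombination_apply, Matrix.sum_apply, Matrix.smul_apply,
    smul_eq_mul, mul_sum]
  refine ((sum_congr rfl fun i _ => Finset.sum_comm).trans Finset.sum_comm).trans
    (sum_congr rfl fun k _ => sum_congr rfl fun i _ => sum_congr rfl fun j _ => ?_)
  ring

lemma le_of_posSemidef_momentMap {x : Fin (m + 1) → ℝ} (hx : x ∈ stdSimplex ℝ (Fin (m + 1)))
    (hA : (momentMap m x).PosSemidef) {Q : Matrix (Fin (m + 1)) (Fin (m + 1)) ℝ}
    (hQ : Q.PosSemidef) {n : Fin (m + 1)} {y : ℝ}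
    (hy : ∀ k, (if k = n then 1 else 0) + ∑ i, ∑ j, Q i j * momentMatrix m k i j ≤ y) :
    x n ≤ y := by
  have hpair := hQ.sum_mul_nonneg hA
  rw [sum_mul_momentMap] at hpair
  calc x n ≤ x n + ∑ k, x k * ∑ i, ∑ j, Q i j * momentMatrix m k i j :=
        le_add_of_nonneg_right hpair
    _ = ∑ k, x k * ((if k = n then 1 else 0) + ∑ i, ∑ j, Q i j * momentMatrix m k i j) := by
        simp [mul_add, sum_add_distrib]
    _ ≤ ∑ k, x k * y := sum_le_sum fun k _ => mul_le_mul_of_nonneg_left (hy k) (hx.1 k)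
    _ = y := by rw [← sum_mul, hx.2, one_mul]

lemma exists_posSemidef_lt_of_forall_lt (n : Fin (m + 1)) {t : ℝ}
    (ht : ∀ x ∈ stdSimplex ℝ (Fin (m + 1)), (momentMap m x).PosSemidef → x n < t) :
    ∃ Q : Matrix (Fin (m + 1)) (Fin (m + 1)) ℝ, Q.PosSemidef ∧
      ∀ k, (if k = n then 1 else 0) + ∑ i, ∑ j, Q i j * momentMatrix m k i j < t := by
  obtain ⟨g, hg, hgt⟩ := exists_lagrangian_lt_of_forall_lt (convex_stdSimplex ℝ _)
    (isCompact_stdSimplex ℝ _) (convex_setOf_posSemidef (𝕜 := ℝ))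
    isClosed_setOf_posSemidef
    (fun A hA s hs => hA.smul hs) (momentMap m).toContinuousLinearMap
    (ContinuousLinearMap.proj n) (single_mem_stdSimplex ℝ (Fin.last m))
    (by simpa [momentMap_single] using posSemidef_momentMatrix_self m) ht
  obtain ⟨Q, hQ, hgQ⟩ := exists_posSemidef_forall_isSymm_eq g.toLinearMap hg
  refine ⟨Q, hQ, fun k => ?_⟩
  have hgk : g (momentMatrix m k) = ∑ i, ∑ j, Q i j * momentMatrix m k i j :=
    hgQ _ (isSymm_evenHankel _ _)
  simpa [momentMap_single, Pi.single_apply, hgk, eq_comm] using hgt _ (single_mem_stdSimplex ℝ k)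

lemma sum_fin_eq_sum_range_mul_choose {l : ℕ} (hl : l ≤ m) (F : ℕ → ℝ) :
    ∑ k : Fin (m + 1), F k * l.choose k * l ! = ∑ k ∈ range (l + 1), F k * l.choose k * l ! := by
  rw [Fin.sum_univ_eq_sum_range (fun k => F k * l.choose k * l !)]
  refine (sum_subset (range_subset_range.2 (by omega)) fun k _ hk => ?_).symm
  simp [Nat.choose_eq_zero_of_lt (show l < k by simpa using hk)]

lemma mem_primalValues_iff {n : ℕ} (hn : n < m + 1) {v : ℝ} :
    v ∈ primalValues m n ↔ ∃ x ∈ stdSimplex ℝ (Fin (m + 1)),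
      (momentMap m x).PosSemidef ∧ x ⟨n, hn⟩ = v := by
  constructor
  · rintro ⟨A, F, hA, hsum, hF, heven, hodd, rfl⟩
    refine ⟨fun k => F k, ⟨fun k => hF k k.is_le, by rwa [Fin.sum_univ_eq_sum_range F]⟩, ?_, rfl⟩
    convert hA
    ext i j
    rw [momentMap_apply, evenHankel, of_apply]
    split_ifs with h
    · rw [heven i j ((i.val + j.val) / 2) (by omega), sum_fin_eq_sum_range_mul_choose (by omega)]
    · rw [hodd i j (by omega)]
  · rintro ⟨x, hx, hA, rfl⟩
    set F : ℕ → ℝ := fun k => if h : k < m + 1 then x ⟨k, h⟩ else 0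
    have hF : ∀ k : Fin (m + 1), F k = x k := fun k => dif_pos k.is_lt
    refine ⟨momentMap m x, F, hA, ?_, fun k hk => ?_, fun i j l hl => ?_, fun i j h => ?_, ?_⟩
    · rw [← Fin.sum_univ_eq_sum_range, ← hx.2]
      simp only [hF]
    · rw [show F k = x ⟨k, by omega⟩ from hF ⟨k, by omega⟩]
      exact hx.1 _
    · rw [momentMap_apply, evenHankel, of_apply, show (i.val + j.val) / 2 = l by omega,
        if_pos (by omega), ← sum_fin_eq_sum_range_mul_choose (m := m) (by omega)]
      simp only [hF]
    · rw [momentMap_apply, evenHankel, of_apply, if_neg (by omega)]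
    · exact (hF ⟨n, hn⟩).symm

lemma dual_constraint_iff (Q : Matrix (Fin (m + 1)) (Fin (m + 1)) ℝ) (μ : ℕ → ℝ) :
    (∀ l ≤ m, antidiagSum Q (2 * l) =
        ∑ k ∈ Icc l m, ((-1 : ℝ) ^ (k + l) / l !) * k.choose l * μ k) ↔
      ∀ k ≤ m, μ k = ∑ i, ∑ j, Q i j * momentMatrix m k i j := by
  set b : ℕ → ℝ := fun l => l ! * antidiagSum Q (2 * l)
  have hprimal : ∀ l ≤ m, (antidiagSum Q (2 * l) =
        ∑ k ∈ Icc l m, ((-1 : ℝ) ^ (k + l) / l !) * k.choose l * μ k) ↔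
      b l = ∑ k ∈ range (m + 1), (-1) ^ (k + l) * k.choose l * μ k := by
    intro l _
    have hIcc : ∑ k ∈ Icc l m, ((-1 : ℝ) ^ (k + l) / l !) * k.choose l * μ k =
        (l ! : ℝ)⁻¹ * ∑ k ∈ range (m + 1), (-1) ^ (k + l) * k.choose l * μ k := by
      rw [mul_sum]
      refine sum_subset (fun k hk => ?_) (fun k hkm hk => ?_) |>.trans (sum_congr rfl fun k _ => ?_)
      · simp only [mem_Icc, mem_range] at hk ⊢; omega
      · simp only [mem_Icc, mem_range] at hkm hk
        simp [Nat.choose_eq_zero_of_lt (show k < l by omega)]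
      · ring
    rw [hIcc, eq_inv_mul_iff_mul_eq₀ (by positivity)]
  have hdual : ∀ k, ∑ i, ∑ j, Q i j * momentMatrix m k i j =
      ∑ l ∈ range (m + 1), l.choose k * b l := by
    intro k
    rw [momentMatrix, sum_mul_evenHankel]
    exact sum_congr rfl fun l _ => by ring
  rw [forall₂_congr hprimal, binomial_inversion]
  exact forall₂_congr fun k _ => by rw [hdual]

lemma mem_dualValues_iff {n : ℕ} (hn : n < m + 1) {y : ℝ} :
    y ∈ dualValues m n ↔ ∃ Q : Matrix (Fin (m + 1)) (Fin (m + 1)) ℝ, Q.PosSemidef ∧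
      ∀ k : Fin (m + 1),
        (if k = ⟨n, hn⟩ then 1 else 0) + ∑ i, ∑ j, Q i j * momentMatrix m k i j ≤ y := by
  constructor
  · rintro ⟨Q, μ, hQ, hyn, hy, hμ⟩
    refine ⟨Q, hQ, fun k => ?_⟩
    rw [← (dual_constraint_iff Q μ).1 hμ k k.is_le]
    split_ifs with h
    · subst h
      exact hyn
    · simpa using hy k k.is_le
  · rintro ⟨Q, hQ, hy⟩
    refine ⟨Q, fun k => ∑ i, ∑ j, Q i j * momentMatrix m k i j, hQ, by simpa using hy ⟨n, hn⟩,
      fun k hk => ?_, (dual_constraint_iff Q _).2 fun k _ => rfl⟩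
    have := hy ⟨k, by omega⟩
    split_ifs at this <;> linarith

end

theorem strong_duality_relaxation_general (m n : ℕ) (hmn : n ≤ m) :
    sSup {v : ℝ | ∃ (A : Matrix (Fin (m + 1)) (Fin (m + 1)) ℝ) (F : ℕ → ℝ),
      A.PosSemidef ∧
      (∑ k ∈ Finset.range (m + 1), F k) = 1 ∧
      (∀ k ≤ m, 0 ≤ F k) ∧
      (∀ (i j : Fin (m + 1)) (l : ℕ), i.val + j.val = 2 * l →
        A i j = ∑ k ∈ Finset.range (l + 1),
          F k * (l.choose k : ℝ) * (l.factorial : ℝ)) ∧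
      (∀ i j : Fin (m + 1), (i.val + j.val) % 2 = 1 → A i j = 0) ∧
      v = F n} =
    sInf {y : ℝ | ∃ (Q : Matrix (Fin (m + 1)) (Fin (m + 1)) ℝ) (μ : ℕ → ℝ),
      Q.PosSemidef ∧
      1 + μ n ≤ y ∧
      (∀ k ≤ m, μ k ≤ y) ∧
      (∀ l ≤ m,
        (∑ i : Fin (m + 1), ∑ j : Fin (m + 1),
          if i.val + j.val = 2 * l then Q i j else 0)
        = ∑ k ∈ Finset.Icc l m,
            ((-1 : ℝ) ^ (k + l) / (l.factorial : ℝ)) * (k.choose l : ℝ) * μ k)} := by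
  have hn : n < m + 1 := Nat.lt_succ_of_le hmn
  refine csSup_eq_csInf_of_forall_le_of_forall_lt_mem (S := primalValues m n)
    (T := dualValues m n) ?_ ⟨1, fun v hv => ?_⟩ (fun v hv y hy => ?_) fun t ht => ?_
  · refine ⟨_, (mem_primalValues_iff hn).2 ⟨_, single_mem_stdSimplex ℝ (Fin.last m), ?_, rfl⟩⟩
    rw [momentMap_single]
    exact posSemidef_momentMatrix_self m
  · obtain ⟨x, hx, -, rfl⟩ := (mem_primalValues_iff hn).1 hv
    exact (mem_Icc_of_mem_stdSimplex hx _).2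
  · obtain ⟨x, hx, hA, rfl⟩ := (mem_primalValues_iff hn).1 hv
    obtain ⟨Q, hQ, hQy⟩ := (mem_dualValues_iff hn).1 hy
    exact le_of_posSemidef_momentMap hx hA hQ hQy
  · obtain ⟨Q, hQ, hQt⟩ := exists_posSemidef_lt_of_forall_lt ⟨n, hn⟩ fun x hx hA =>
      ht _ ((mem_primalValues_iff hn).2 ⟨x, hx, hA, rfl⟩)
    exact (mem_dualValues_iff hn).2 ⟨Q, hQ, fun k => (hQt k).le⟩

/-- strong duality between the semidefinite relaxation `(SDP^{m,≥}_n)`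
and its dual `(D-SDP^{m,≥}_n)`: the supremum of `F_n` over primal feasible pairs `(A, F)`
equals the infimum of `y` over dual feasible triples `(Q, μ, y)`. -/
theorem strong_duality_relaxation (m n : ℕ) (hn : 1 ≤ n) (hmn : n ≤ m) :
    sSup {v : ℝ | ∃ (A : Matrix (Fin (m + 1)) (Fin (m + 1)) ℝ) (F : ℕ → ℝ),
      A.PosSemidef ∧
      (∑ k ∈ Finset.range (m + 1), F k) = 1 ∧
      (∀ k ≤ m, 0 ≤ F k) ∧
      (∀ (i j : Fin (m + 1)) (l : ℕ), i.val + j.val = 2 * l →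
        A i j = ∑ k ∈ Finset.range (l + 1),
          F k * (l.choose k : ℝ) * (l.factorial : ℝ)) ∧
      (∀ i j : Fin (m + 1), (i.val + j.val) % 2 = 1 → A i j = 0) ∧
      v = F n} =
    sInf {y : ℝ | ∃ (Q : Matrix (Fin (m + 1)) (Fin (m + 1)) ℝ) (μ : ℕ → ℝ),
      Q.PosSemidef ∧
      1 + μ n ≤ y ∧
      (∀ k ≤ m, μ k ≤ y) ∧
      (∀ l ≤ m,
        (∑ i : Fin (m + 1), ∑ j : Fin (m + 1),
          if i.val + j.val = 2 * l then Q i j else 0)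
        = ∑ k ∈ Finset.Icc l m,
            ((-1 : ℝ) ^ (k + l) / (l.factorial : ℝ)) * (k.choose l : ℝ) * μ k)} :=
  strong_duality_relaxation_general m n hmn
end

section
/- The threshold value for n = 1 equals one half: the supremum of F_1 over all sequences F : ℕ → ℝ with F_k ≥ 0 for all k, ∑_k F_k = 1, and ∑_k F_k 𝓛_k(x) ≥ 0 for every x ≥ 0, equals 1/2; moreover the same supremum restricted to rapidly decreasing sequences also equals 1/2, and it is attained by the sequence F = (1/2, 1/2, 0, 0, …). -/
/-- The optimizing sequence `F = (1/2, 1/2, 0, 0, …)`. -/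
noncomputable def Fopt : ℕ → ℝ := fun k => if k = 0 ∨ k = 1 then 1 / 2 else 0

lemma laguerreFun_zero (k : ℕ) : laguerreFun k 0 = (-1 : ℝ) ^ k := by
  have h : laguerreL k 0 = 1 := by
    unfold laguerreL
    rw [Finset.sum_eq_single 0]
    · simp
    · intro b _ hb
      simp [zero_pow hb]
    · simp
  simp [laguerreFun, h]

lemma Fopt_eventually (k : ℕ) (hk : k ∉ Finset.range 2) : Fopt k = 0 := by
  simp only [Finset.mem_range] at hk
  have h0 : k ≠ 0 := by omega
  have h1 : k ≠ 1 := by omega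
  simp [Fopt, h0, h1]

lemma Fopt_tsum_eval (g : ℕ → ℝ) :
    ∑' k, Fopt k * g k = 1/2 * g 0 + 1/2 * g 1 := by
  rw [tsum_eq_sum (s := Finset.range 2) (by
    intro k hk; rw [Fopt_eventually k hk]; ring)]
  simp [Finset.sum_range_succ, Fopt]

lemma lagL0 (x : ℝ) : laguerreL 0 x = 1 := by simp [laguerreL]

lemma lagL1 (x : ℝ) : laguerreL 1 x = 1 - x := by
  simp [laguerreL, Finset.sum_range_succ]; ring

lemma upper_bound (F : ℕ → ℝ) (hpos : ∀ k, 0 ≤ F k) (hsum : (∑' k, F k) = 1)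
    (hx : ∀ x : ℝ, 0 ≤ x → 0 ≤ ∑' k, F k * laguerreFun k x) : F 1 ≤ 1 / 2 := by
  have hSummable : Summable F := by
    by_contra h
    rw [tsum_eq_zero_of_not_summable h] at hsum
    norm_num at hsum
  have hA : 0 ≤ ∑' k, F k * (-1 : ℝ) ^ k := by
    have := hx 0 le_rfl
    simpa [laguerreFun_zero] using this
  have hSA : Summable (fun k => F k * (-1 : ℝ) ^ k) := by
    apply Summable.of_abs
    apply hSummable.abs.congr
    intro k
    rw [abs_mul]
    simp [abs_of_nonneg (hpos k)]
  set g : ℕ → ℝ := fun k => F k * (1 - (-1 : ℝ) ^ k) with hg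
  have hgpos : ∀ k, 0 ≤ g k := by
    intro k
    apply mul_nonneg (hpos k)
    rcases Nat.even_or_odd k with h | h
    · simp [h.neg_one_pow]
    · simp [h.neg_one_pow]
  have hgs : Summable g := by
    have : g = fun k => F k - F k * (-1:ℝ)^k := by funext k; ring
    rw [this]; exact hSummable.sub hSA
  have hgt : ∑' k, g k = 1 - ∑' k, F k * (-1 : ℝ) ^ k := by
    have : g = fun k => F k - F k * (-1:ℝ)^k := by funext k; ring
    rw [this, Summable.tsum_sub hSummable hSA, hsum]
  have h1 : g 1 ≤ ∑' k, g k := Summable.le_tsum hgs 1 (fun k _ => hgpos k)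
  have : g 1 = 2 * F 1 := by simp [hg]; ring
  rw [this, hgt] at h1
  linarith

lemma Fopt_rapid : ∀ p : ℕ, ∃ C : ℝ, ∀ k : ℕ, (k : ℝ) ^ p * |Fopt k| ≤ C := by
  intro p
  refine ⟨1, fun k => ?_⟩
  match k with
  | 0 => have h0 : Fopt 0 = 1/2 := by simp [Fopt]
         rw [h0, abs_of_nonneg (by norm_num : (0:ℝ) ≤ 1/2)]
         rcases Nat.eq_zero_or_pos p with h | h
         · norm_num [h]
         · norm_num [zero_pow h.ne']
  | 1 => have h1 : Fopt 1 = 1/2 := by simp [Fopt]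
         rw [h1, abs_of_nonneg (by norm_num : (0:ℝ) ≤ 1/2)]
         norm_num
  | (n+2) =>
    have : Fopt (n+2) = 0 := by simp [Fopt]
    simp [this]

lemma Fopt_pos : ∀ k, 0 ≤ Fopt k := by
  intro k; unfold Fopt; split <;> norm_num

lemma Fopt_sum : (∑' k, Fopt k) = 1 := by
  have := Fopt_tsum_eval (fun _ => 1)
  simp only [mul_one] at this
  rw [this]; norm_num

lemma Fopt_feas : ∀ x : ℝ, 0 ≤ x → 0 ≤ ∑' k, Fopt k * laguerreFun k x := by
  intro x hx
  rw [Fopt_tsum_eval]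
  have : 1/2 * laguerreFun 0 x + 1/2 * laguerreFun 1 x = x/2 * Real.exp (-x/2) := by
    simp [laguerreFun, lagL0, lagL1]; ring
  rw [this]
  positivity

/-- the threshold value for `n = 1` equals `1/2`, both over all feasible
sequences and over rapidly decreasing feasible sequences, and it is attained by the
sequence `(1/2, 1/2, 0, 0, …)`. -/
theorem threshold_value_one :
    sSup {v : ℝ | ∃ F : ℕ → ℝ, (∀ k, 0 ≤ F k) ∧ (∑' k, F k) = 1 ∧
        (∀ x : ℝ, 0 ≤ x → 0 ≤ ∑' k, F k * laguerreFun k x) ∧ v = F 1} = 1 / 2 ∧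
    sSup {v : ℝ | ∃ F : ℕ → ℝ,
        (∀ p : ℕ, ∃ C : ℝ, ∀ k : ℕ, (k : ℝ) ^ p * |F k| ≤ C) ∧
        (∀ k, 0 ≤ F k) ∧ (∑' k, F k) = 1 ∧
        (∀ x : ℝ, 0 ≤ x → 0 ≤ ∑' k, F k * laguerreFun k x) ∧ v = F 1} = 1 / 2 ∧
    ((∀ p : ℕ, ∃ C : ℝ, ∀ k : ℕ, (k : ℝ) ^ p * |Fopt k| ≤ C) ∧
      (∀ k, 0 ≤ Fopt k) ∧ (∑' k, Fopt k) = 1 ∧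
      (∀ x : ℝ, 0 ≤ x → 0 ≤ ∑' k, Fopt k * laguerreFun k x) ∧
      Fopt 1 = 1 / 2) := by
  have hF1 : Fopt 1 = 1/2 := by norm_num [Fopt]
  refine ⟨?_, ?_, Fopt_rapid, Fopt_pos, Fopt_sum, Fopt_feas, hF1⟩
  · apply le_antisymm
    · refine csSup_le ⟨1/2, ?_⟩ ?_
      · exact ⟨Fopt, Fopt_pos, Fopt_sum, Fopt_feas, hF1.symm⟩
      rintro v ⟨F, hp, hs, hf, rfl⟩
      exact upper_bound F hp hs hf
    · apply le_csSup
      · exact ⟨1/2, by rintro v ⟨F, hp, hs, hf, rfl⟩; exact upper_bound F hp hs hf⟩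
      · exact ⟨Fopt, Fopt_pos, Fopt_sum, Fopt_feas, hF1.symm⟩
  · apply le_antisymm
    · refine csSup_le ⟨1/2, ?_⟩ ?_
      · exact ⟨Fopt, Fopt_rapid, Fopt_pos, Fopt_sum, Fopt_feas, hF1.symm⟩
      rintro v ⟨F, _, hp, hs, hf, rfl⟩
      exact upper_bound F hp hs hf
    · apply le_csSup
      · exact ⟨1/2, by rintro v ⟨F, _, hp, hs, hf, rfl⟩; exact upper_bound F hp hs hf⟩
      · exact ⟨Fopt, Fopt_rapid, Fopt_pos, Fopt_sum, Fopt_feas, hF1.symm⟩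
end

section
/- Let n ∈ ℕ be even and define F_k^n = 2^{−n} · C(k, k/2) · C(n−k, (n−k)/2) for even k with 0 ≤ k ≤ n and F_k^n = 0 otherwise. Define real coefficients p_0, …, p_n by: p_n = √( 2^{−n} · C(n, n/2) / n! ); for even k with 0 < k ≤ n, p_{n−k} = (−1)^{k/2} · 2^{k/2} · (k/2)! · C(n/2, k/2)² · p_n; and p_{n−k} = 0 for odd k. Then for all x ∈ ℝ, ∑_{k=0}^{n} (−1)^k F_k^n L_k(x) = ∑_{l=0}^{n} x^l · ∑_{i,j ≥ 0, i+j = 2n−2l} p_{n−i} p_{n−j}, with the convention p_j = 0 for j ∉ {0, …, n}. -/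
/-!
Write `n = 2m`. Substituting the coefficients `p` (only even indices survive, and
`p_n² = 1 / (4^m m!²)`), the right-hand side becomes `L_m(x/2)²`, whose coefficient of `x^l` is
`(-1)^l / 2^l · ∑_{a+b=l} C(m,a) C(m,b) / (a! b!)`. The coefficient of `x^l` on the left is
`(-1)^l / (4^m l!) · ∑_u C(2u,u) C(2m-2u,m-u) C(2u,l)`. Creative telescoping (Zeilberger) shows that
both coefficient sequences satisfy the same three-term recurrence in `l`, whose coefficient of the
`l`-th term, `(l+1)(2m-l)`, vanishes for no `l < 2m`; as they agree at `l = 2m` and `l = 2m + 1`,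
they agree for all `l ≤ 2m`.
-/

open Finset Nat

theorem Nat.cast_choose_succ_right_eq {R : Type*} [CommRing R] (n k : ℕ) :
    ((k : R) + 1) * n.choose (k + 1) = ((n : R) - k) * n.choose k := by
  rcases le_or_gt k n with h | h
  · have := congrArg (Nat.cast (R := R)) (choose_succ_right_eq n k)
    push_cast [Nat.cast_sub h] at this
    linear_combination this
  · rw [choose_eq_zero_of_lt h, choose_eq_zero_of_lt (by omega)]
    simp

theorem Nat.succ_mul_centralBinom_succ_mul_centralBinom (u j : ℕ) :
    (u + 1) * (2 * j + 1) * centralBinom (u + 1) * centralBinom j =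
      (2 * u + 1) * (j + 1) * centralBinom u * centralBinom (j + 1) := by
  calc (u + 1) * (2 * j + 1) * centralBinom (u + 1) * centralBinom j
      = ((u + 1) * centralBinom (u + 1)) * (2 * j + 1) * centralBinom j := by ring
    _ = (2 * u + 1) * centralBinom u * ((j + 1) * centralBinom (j + 1)) := by
      rw [succ_mul_centralBinom_succ, succ_mul_centralBinom_succ]; ring
    _ = _ := by ring

theorem eq_of_recurrence_of_eq_top {M₀ : Type*} [MonoidWithZero M₀] [IsLeftCancelMulZero M₀]
    {f g a : ℕ → M₀} (Φ : ℕ → M₀ → M₀ → M₀) {N : ℕ} (ha : ∀ l < N, a l ≠ 0)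
    (hf : ∀ l < N, a l * f l = Φ l (f (l + 1)) (f (l + 2)))
    (hg : ∀ l < N, a l * g l = Φ l (g (l + 1)) (g (l + 2)))
    (hN : f N = g N) (hN1 : f (N + 1) = g (N + 1)) :
    ∀ l ≤ N + 1, f l = g l := by
  suffices h : ∀ d l, l + d = N → f l = g l ∧ f (l + 1) = g (l + 1) by
    intro l hl
    rcases eq_or_lt_of_le hl with rfl | hl
    · exact hN1
    · exact (h (N - l) l (by omega)).1
  intro d
  induction d with
  | zero => rintro l rfl; exact ⟨hN, hN1⟩
  | succ d ih =>
    intro l hl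
    obtain ⟨h1, h2⟩ := ih (l + 1) (by omega)
    refine ⟨mul_left_cancel₀ (ha l (by omega)) ?_, h1⟩
    rw [hf l (by omega), hg l (by omega), h1, h2]

theorem sum_range_two_mul_add_one_eq_of_odd {M : Type*} [AddCommMonoid M] (f : ℕ → M)
    (hf : ∀ k, Odd k → f k = 0) (N : ℕ) :
    ∑ k ∈ range (2 * N + 1), f k = ∑ u ∈ range (N + 1), f (2 * u) := by
  induction N with
  | zero => simp
  | succ N ih =>
    rw [sum_range_succ _ (N + 1), ← ih, show 2 * (N + 1) + 1 = 2 * N + 1 + 1 + 1 by ring,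
      sum_range_succ, sum_range_succ, hf _ (odd_two_mul_add_one N), add_zero]
    rfl

theorem sum_antidiagonal_two_mul_eq_of_odd {M : Type*} [AddCommMonoid M] (f : ℕ × ℕ → M)
    (hf : ∀ ij, Odd ij.1 → f ij = 0) (N : ℕ) :
    ∑ ij ∈ antidiagonal (2 * N), f ij = ∑ st ∈ antidiagonal N, f (2 * st.1, 2 * st.2) := by
  rw [Nat.sum_antidiagonal_eq_sum_range_succ_mk, Nat.sum_antidiagonal_eq_sum_range_succ_mk,
    sum_range_two_mul_add_one_eq_of_odd _ (fun k hk => hf _ hk)]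
  refine sum_congr rfl fun u _ => ?_
  rw [Nat.mul_sub]

theorem sum_antidiagonal_sub_mul_sub {R : Type*} [Semiring R] (w : ℤ → R) {m l : ℕ}
    (hl : l ≤ 2 * m) (hw₀ : ∀ j < 0, w j = 0) (hw : ∀ j, (m : ℤ) < j → w j = 0) :
    ∑ st ∈ antidiagonal (2 * m - l), w (m - st.1) * w (m - st.2) =
      ∑ a ∈ range (l + 1), w a * w (l - a) := by
  have supp : ∀ j, w j ≠ 0 → 0 ≤ j ∧ j ≤ m := fun j hj =>
    ⟨not_lt.mp fun h => hj (hw₀ j h), not_lt.mp fun h => hj (hw j h)⟩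
  refine sum_bij_ne_zero (fun st _ _ => m - st.1) ?_ ?_ ?_ ?_
  · intro ⟨s, t⟩ hst hne
    have h1 := supp _ (left_ne_zero_of_mul hne)
    have h2 := supp _ (right_ne_zero_of_mul hne)
    simp only [HasAntidiagonal.mem_antidiagonal, mem_range] at hst ⊢
    omega
  · intro ⟨s₁, t₁⟩ h₁ hne₁ ⟨s₂, t₂⟩ h₂ hne₂ heq
    have := supp _ (left_ne_zero_of_mul hne₁)
    have := supp _ (left_ne_zero_of_mul hne₂)
    simp only [HasAntidiagonal.mem_antidiagonal] at h₁ h₂ heq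
    ext <;> simp only <;> omega
  · intro a ha hne
    have h1 := supp _ (left_ne_zero_of_mul hne)
    have h2 := supp _ (right_ne_zero_of_mul hne)
    simp only [mem_range] at ha
    refine ⟨(m - a, m + a - l), by simp only [HasAntidiagonal.mem_antidiagonal]; omega, ?_,
      by simp only; omega⟩
    rwa [show ((m : ℤ) - (m - a : ℕ)) = a by omega,
      show ((m : ℤ) - (m + a - l : ℕ)) = l - a by omega]
  · intro ⟨s, t⟩ hst hne
    have h1 := supp _ (left_ne_zero_of_mul hne)
    have h2 := supp _ (right_ne_zero_of_mul hne)
    simp only [HasAntidiagonal.mem_antidiagonal] at hst h1 h2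
    rw [show (((m - s : ℕ)) : ℤ) = m - s by omega, show (l : ℤ) - (m - s) = m - t by omega]

theorem sum_mul_laguerreL (c : ℕ → ℝ) (n : ℕ) (x : ℝ) :
    ∑ k ∈ range (n + 1), c k * laguerreL k x =
      ∑ l ∈ range (n + 1), x ^ l * ((-1) ^ l / l ! * ∑ k ∈ range (n + 1), c k * k.choose l) := by
  have extend : ∀ k ∈ range (n + 1), laguerreL k x =
      ∑ l ∈ range (n + 1), (-1) ^ l / l ! * k.choose l * x ^ l := fun k hk =>
    sum_subset (range_subset_range.mpr (by simp at hk; omega)) fun l _ hl => by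
      rw [choose_eq_zero_of_lt (by simp at hk hl; omega)]
      simp
  rw [sum_congr rfl fun k hk => by rw [extend k hk]]
  simp only [mul_sum]
  rw [sum_comm]
  exact sum_congr rfl fun l _ => sum_congr rfl fun k _ => by ring

/-- The coefficient of `y ^ a` in `L_m(-y)`, extended by zero to negative `a`. -/
noncomputable def chooseDivFactorial (m : ℕ) (a : ℤ) : ℝ :=
  if 0 ≤ a then (m.choose a.toNat : ℝ) / a.toNat ! else 0

noncomputable def chooseDivFactorialConv (m l : ℕ) : ℝ :=
  ∑ a ∈ range (l + 1), chooseDivFactorial m a * chooseDivFactorial m (l - a)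

namespace chooseDivFactorial

variable (m : ℕ)

theorem of_neg {a : ℤ} (h : a < 0) : chooseDivFactorial m a = 0 := by
  simp [chooseDivFactorial, not_le.mpr h]

@[simp]
theorem natCast (a : ℕ) : chooseDivFactorial m a = (m.choose a : ℝ) / a ! := by
  simp [chooseDivFactorial]

theorem of_lt {a : ℤ} (h : (m : ℤ) < a) : chooseDivFactorial m a = 0 := by
  lift a to ℕ using by omega
  rw [natCast, choose_eq_zero_of_lt (by omega), Nat.cast_zero, zero_div]

theorem recurrence (j : ℤ) :
    ((j : ℝ) + 1) ^ 2 * chooseDivFactorial m (j + 1) = ((m : ℝ) - j) * chooseDivFactorial m j := by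
  rcases lt_trichotomy j (-1) with h | rfl | h
  · rw [of_neg m (by omega), of_neg m (by omega)]; ring
  · simp [of_neg m (show (-1 : ℤ) < 0 by norm_num)]
  · lift j to ℕ using by omega
    have hj : (j ! : ℝ) ≠ 0 := by positivity
    rw [show (j : ℤ) + 1 = ((j + 1 : ℕ) : ℤ) by push_cast; rfl, natCast, natCast,
      factorial_succ]
    push_cast
    field_simp
    linear_combination Nat.cast_choose_succ_right_eq (R := ℝ) m j

theorem factorial_mul_sub {s : ℕ} (hs : s ≤ m) :
    m ! * chooseDivFactorial m ((m : ℤ) - s) = s ! * (m.choose s : ℝ) ^ 2 := by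
  have h := congrArg (Nat.cast (R := ℝ)) (choose_mul_factorial_mul_factorial hs)
  push_cast at h
  rw [show (m : ℤ) - s = ((m - s : ℕ) : ℤ) by omega, natCast, choose_symm hs, ← h]
  field_simp

end chooseDivFactorial

namespace chooseDivFactorialConv

variable (m : ℕ)

theorem eq_sum_range {l N : ℕ} (hN : l + 1 ≤ N) :
    chooseDivFactorialConv m l =
      ∑ a ∈ range N, chooseDivFactorial m a * chooseDivFactorial m ((l : ℤ) - a) := by
  refine sum_subset (range_subset_range.mpr hN) fun a _ ha => ?_
  rw [chooseDivFactorial.of_neg m (a := (l : ℤ) - a) (by simp at ha; omega), mul_zero]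

theorem recurrence (l : ℕ) :
    2 * (2 * (m : ℝ) - l) * chooseDivFactorialConv m l =
      ((l : ℝ) + 2) ^ 3 * chooseDivFactorialConv m (l + 2) -
        (4 * m * (l + 1) + 2 * m - 3 * (l + 1) ^ 2 - (l + 1)) *
          chooseDivFactorialConv m (l + 1) := by
  set V := chooseDivFactorial m
  set β : ℝ := 4 * m * (l + 1) + 2 * m - 3 * (l + 1) ^ 2 - (l + 1)
  set Φ : ℕ → ℝ := fun a => -2 * (a : ℝ) ^ 2 * (V a * V ((l : ℤ) + 1 - a)) +
    (3 * l - 2 * a + 6) * (a - 1 - m) * (V ((a : ℤ) - 1) * V ((l : ℤ) + 2 - a)) with hΦ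
  have step : ∀ a : ℕ, ((l : ℝ) + 2) ^ 3 * (V a * V ((l : ℤ) + 2 - a)) -
      β * (V a * V ((l : ℤ) + 1 - a)) - 2 * (2 * (m : ℝ) - l) * (V a * V ((l : ℤ) - a)) =
        Φ (a + 1) - Φ a := by
    intro a
    have h1 := chooseDivFactorial.recurrence m a
    have h2 := chooseDivFactorial.recurrence m ((a : ℤ) - 1)
    have h3 := chooseDivFactorial.recurrence m ((l : ℤ) - a)
    have h4 := chooseDivFactorial.recurrence m ((l : ℤ) + 1 - a)
    simp only [sub_add_cancel, show (l : ℤ) - a + 1 = l + 1 - a by ring,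
      show (l : ℤ) + 1 - a + 1 = l + 2 - a by ring] at h2 h3 h4
    push_cast at h1 h2 h3 h4
    simp only [hΦ]
    push_cast
    rw [show (l : ℤ) + 1 - (a + 1) = l - a by ring, show (a : ℤ) + 1 - 1 = a by ring,
      show (l : ℤ) + 2 - (a + 1) = l + 1 - a by ring]
    linear_combination 2 * V ((l : ℤ) - a) * h1 +
      (3 * (l : ℝ) + 6 - 2 * a) * V ((l : ℤ) + 2 - a) * h2 + 2 * V a * h3 +
      (2 * (a : ℝ) + l + 2) * V a * h4
  have hΦ0 : Φ 0 = 0 := by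
    simp [hΦ, V, chooseDivFactorial.of_neg m (show (-1 : ℤ) < 0 by norm_num)]
  have hΦtop : Φ (l + 3) = 0 := by
    simp only [hΦ, V]
    rw [chooseDivFactorial.of_neg m (a := (l : ℤ) + 1 - ((l + 3 : ℕ) : ℤ)) (by push_cast; omega),
      chooseDivFactorial.of_neg m (a := (l : ℤ) + 2 - ((l + 3 : ℕ) : ℤ)) (by push_cast; omega)]
    ring
  have telescope := sum_range_sub Φ (l + 3)
  rw [hΦ0, hΦtop, ← sum_congr rfl fun a _ => step a] at telescope
  rw [eq_sum_range m (N := l + 3) (by omega), eq_sum_range m (l := l + 1) (N := l + 3) (by omega),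
    eq_sum_range m (l := l + 2) (N := l + 3) le_rfl]
  simp only [sum_sub_distrib, ← mul_sum] at telescope
  push_cast
  linear_combination -telescope

theorem two_mul_add_one : chooseDivFactorialConv m (2 * m + 1) = 0 := by
  refine sum_eq_zero fun a ha => ?_
  rcases le_or_gt a m with h | h
  · rw [chooseDivFactorial.of_lt m (a := ((2 * m + 1 : ℕ) : ℤ) - a) (by push_cast; omega), mul_zero]
  · rw [chooseDivFactorial.of_lt m (a := (a : ℤ)) (by exact_mod_cast h), zero_mul]

theorem two_mul : chooseDivFactorialConv m (2 * m) = 1 / (m ! : ℝ) ^ 2 := by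
  rw [chooseDivFactorialConv, sum_eq_single_of_mem m (by simp; omega)]
  · rw [show ((2 * m : ℕ) : ℤ) - (m : ℕ) = (m : ℕ) by push_cast; ring, chooseDivFactorial.natCast,
      choose_self]
    ring
  · intro a ha hne
    rcases le_or_gt a m with h | h
    · rw [chooseDivFactorial.of_lt m (a := ((2 * m : ℕ) : ℤ) - a) (by simp at ha; push_cast; omega),
        mul_zero]
    · rw [chooseDivFactorial.of_lt m (a := (a : ℤ)) (by exact_mod_cast h), zero_mul]

end chooseDivFactorialConv

def centralBinomChooseSum (m l : ℕ) : ℕ :=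
  ∑ u ∈ range (m + 1), u.centralBinom * (m - u).centralBinom * (2 * u).choose l

/-- Zeilberger's certificate for the recurrence of `centralBinomChooseSum` in `l`. -/
theorem choose_two_mul_certificate (m : ℝ) (u l : ℕ) :
    2 * ((l : ℝ) + 2) ^ 2 * (2 * u).choose (l + 2) -
        (4 * m * (l + 1) + 2 * m - 3 * (l + 1) ^ 2 - (l + 1)) * (2 * u).choose (l + 1) -
          (l + 1) * (2 * m - l) * (2 * u).choose l =
      2 * u * (2 * m + 1 - 2 * u) * (2 * u - 1).choose (l + 1) -
        2 * (2 * u + 1) * (m - u) * (2 * u + 1).choose (l + 1) := by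
  rcases u with _ | w
  · rcases l with _ | t
    · norm_num
    · simp [choose_eq_zero_of_lt]
  · rw [show 2 * (w + 1) = 2 * w + 1 + 1 by ring, show 2 * w + 1 + 1 - 1 = 2 * w + 1 by omega]
    have pascal (n k : ℕ) : ((n + 1).choose (k + 1) : ℝ) = n.choose k + n.choose (k + 1) := by
      exact_mod_cast choose_succ_succ n k
    rcases l with _ | t
    · have h := Nat.cast_choose_succ_right_eq (R := ℝ) (2 * w + 1 + 1) 1
      simp only [zero_add, choose_one_right, choose_zero_right, Nat.reduceAdd] at h ⊢
      push_cast at h ⊢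
      linear_combination 4 * h
    · have hb1 := pascal (2 * w + 1) t
      have hb2 := pascal (2 * w + 1) (t + 1)
      have hb3 := pascal (2 * w + 1) (t + 2)
      have hcc := pascal (2 * w + 1 + 1) (t + 1)
      have h1 := Nat.cast_choose_succ_right_eq (R := ℝ) (2 * w + 1) (t + 2)
      have h2 := Nat.cast_choose_succ_right_eq (R := ℝ) (2 * w + 1) (t + 1)
      have h3 := Nat.cast_choose_succ_right_eq (R := ℝ) (2 * w + 1) t
      push_cast at h1 h2 h3 hb1 hb2 hb3 hcc ⊢
      linear_combination
        (-4 + 2 * m + 3 * (t : ℝ) - 2 * t * m + t ^ 2 - 10 * w + 4 * w * m - 4 * w ^ 2) * hb1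
        + (8 - 4 * m + 13 * (t : ℝ) - 4 * t * m + 3 * t ^ 2 - 10 * w + 4 * w * m - 4 * w ^ 2) * hb2
        + (2 * ((t : ℝ) + 3) ^ 2) * hb3
        + (-6 + 6 * m - 10 * (w : ℝ) + 4 * w * m - 4 * w ^ 2) * hcc
        + (2 * ((t : ℝ) + 3)) * h1
        + (11 - 4 * m + 3 * (t : ℝ) + 4 * w) * h2
        + (4 - 2 * m + (t : ℝ) + 2 * w) * h3

namespace centralBinomChooseSum

variable (m : ℕ)

theorem recurrence (l : ℕ) :
    ((l : ℝ) + 1) * (2 * m - l) * centralBinomChooseSum m l =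
      2 * ((l : ℝ) + 2) ^ 2 * centralBinomChooseSum m (l + 2) -
        (4 * m * (l + 1) + 2 * m - 3 * (l + 1) ^ 2 - (l + 1)) *
          centralBinomChooseSum m (l + 1) := by
  set β : ℝ := 4 * m * (l + 1) + 2 * m - 3 * (l + 1) ^ 2 - (l + 1)
  set w : ℕ → ℝ := fun u => (u.centralBinom * (m - u).centralBinom : ℕ)
  set G : ℕ → ℝ := fun u => 2 * u * (2 * m + 1 - 2 * u) * w u * (2 * u - 1).choose (l + 1)
  set G' : ℕ → ℝ := fun u => 2 * (2 * u + 1) * (m - u) * w u * (2 * u + 1).choose (l + 1)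
  have expand : 2 * ((l : ℝ) + 2) ^ 2 * centralBinomChooseSum m (l + 2) -
      β * centralBinomChooseSum m (l + 1) - (l + 1) * (2 * m - l) * centralBinomChooseSum m l =
        ∑ u ∈ range (m + 1), (G u - G' u) := by
    simp only [centralBinomChooseSum, G, G', w]
    push_cast
    simp only [mul_sum, ← sum_sub_distrib]
    refine sum_congr rfl fun u _ => ?_
    linear_combination (u.centralBinom * (m - u).centralBinom : ℝ) *
      choose_two_mul_certificate m u l
  have link : ∀ u ∈ range m, G (u + 1) = G' u := by
    intro u hu
    obtain ⟨j, rfl⟩ : ∃ j, m = u + 1 + j := ⟨m - (u + 1), by simp at hu; omega⟩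
    have h := congrArg (Nat.cast (R := ℝ)) (succ_mul_centralBinom_succ_mul_centralBinom u j)
    simp only [G, G', w, show u + 1 + j - (u + 1) = j by omega, show u + 1 + j - u = j + 1 by omega,
      show 2 * (u + 1) - 1 = 2 * u + 1 by omega]
    push_cast at h ⊢
    linear_combination 2 * ((2 * u + 1).choose (l + 1) : ℝ) * h
  have telescope : ∑ u ∈ range (m + 1), (G u - G' u) = 0 := by
    rw [sum_sub_distrib, sum_range_succ', sum_range_succ G', sum_congr rfl link]
    simp [G, G']
  linear_combination -expand - telescope

theorem two_mul_add_one : centralBinomChooseSum m (2 * m + 1) = 0 :=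
  sum_eq_zero fun u hu => by rw [choose_eq_zero_of_lt (by simp at hu; omega), mul_zero]

theorem two_mul : centralBinomChooseSum m (2 * m) = m.centralBinom := by
  rw [centralBinomChooseSum, sum_eq_single_of_mem m (self_mem_range_succ m)]
  · simp
  · intro u hu hne
    rw [choose_eq_zero_of_lt (by simp at hu; omega), mul_zero]

theorem eq_chooseDivFactorialConv {l : ℕ} (hl : l ≤ 2 * m + 1) :
    (centralBinomChooseSum m l : ℝ) = 4 ^ m * l ! / 2 ^ l * chooseDivFactorialConv m l := by
  refine eq_of_recurrence_of_eq_top (f := fun l => (centralBinomChooseSum m l : ℝ))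
    (g := fun l => 4 ^ m * l ! / 2 ^ l * chooseDivFactorialConv m l)
    (a := fun l => ((l : ℝ) + 1) * (2 * m - l))
    (fun l x y =>
      2 * ((l : ℝ) + 2) ^ 2 * y - (4 * m * (l + 1) + 2 * m - 3 * (l + 1) ^ 2 - (l + 1)) * x)
    (fun l hl => ?_) (fun l _ => recurrence m l) (fun l _ => ?_) ?_ ?_ l hl
  · have : (l : ℝ) < 2 * m := by exact_mod_cast hl
    exact mul_ne_zero (by positivity) (by linarith)
  · have h := chooseDivFactorialConv.recurrence m l
    rw [factorial_succ, factorial_succ, pow_succ, pow_succ]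
    push_cast
    linear_combination ((l : ℝ) + 1) * (4 ^ m * l ! / 2 ^ l / 2) * h
  · have h := congrArg (Nat.cast (R := ℝ))
      (choose_mul_factorial_mul_factorial (by omega : m ≤ 2 * m))
    rw [show 2 * m - m = m by omega] at h
    push_cast at h
    rw [two_mul, chooseDivFactorialConv.two_mul, centralBinom,
      show (4 : ℝ) ^ m = 2 ^ (2 * m) by rw [pow_mul]; norm_num]
    field_simp
    linear_combination h
  · simp [two_mul_add_one, chooseDivFactorialConv.two_mul_add_one]

end centralBinomChooseSum

theorem sum_weight_mul_choose {F : ℕ → ℝ} {m : ℕ}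
    (hF : ∀ k : ℕ, F k = if k ≤ 2 * m ∧ k % 2 = 0 then
      ((k.choose (k / 2) : ℝ) * ((2 * m - k).choose ((2 * m - k) / 2) : ℝ)) / 2 ^ (2 * m) else 0)
    (l : ℕ) :
    ∑ k ∈ range (2 * m + 1), (-1) ^ k * F k * k.choose l = centralBinomChooseSum m l / 4 ^ m := by
  rw [sum_range_two_mul_add_one_eq_of_odd _ (fun k hk => by
    rw [hF, if_neg (by rw [Nat.odd_iff] at hk; omega)]; simp)]
  simp only [centralBinomChooseSum, Nat.cast_sum, sum_div]
  refine sum_congr rfl fun u hu => ?_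
  rw [hF, if_pos (by simp at hu; omega), show (2 : ℝ) ^ (2 * m) = 4 ^ m by rw [pow_mul]; norm_num,
    show 2 * m - 2 * u = 2 * (m - u) by omega, pow_mul, neg_one_sq, one_pow,
    Nat.mul_div_cancel_left _ two_pos, Nat.mul_div_cancel_left _ two_pos]
  push_cast [centralBinom]
  ring

theorem factorial_mul_sqrt_choose_div_sq (m : ℕ) :
    (m ! * √((2 * m).choose m / (2 ^ (2 * m) * (2 * m)! : ℝ))) ^ 2 = 1 / 4 ^ m := by
  have h := congrArg (Nat.cast (R := ℝ)) (choose_mul_factorial_mul_factorial (by omega : m ≤ 2 * m))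
  rw [show 2 * m - m = m by omega] at h
  push_cast at h
  have hc : ((2 * m).choose m : ℝ) ≠ 0 := Nat.cast_ne_zero.mpr (choose_pos (by omega)).ne'
  rw [mul_pow, Real.sq_sqrt (by positivity), ← h, pow_mul]
  field_simp
  norm_num

theorem coeff_two_mul_sub_two_mul {p : ℤ → ℝ} {m : ℕ}
    (hpe : ∀ s : ℕ, 0 < s → s ≤ m →
      p (2 * m - 2 * s) = (-1) ^ s * 2 ^ s * s ! * (m.choose s : ℝ) ^ 2 * p (2 * m))
    (hneg : ∀ j < 0, p j = 0) (s : ℕ) :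
    p (2 * m - 2 * s) = (-2) ^ s * m ! * p (2 * m) * chooseDivFactorial m (m - s) := by
  rcases le_or_gt s m with hs | hs
  · have h : p (2 * m - 2 * s) = (-1) ^ s * 2 ^ s * s ! * (m.choose s : ℝ) ^ 2 * p (2 * m) := by
      rcases Nat.eq_zero_or_pos s with rfl | hs₀
      · simp
      · exact hpe s hs₀ hs
    rw [h, neg_pow (2 : ℝ)]
    linear_combination -((-1) ^ s * 2 ^ s * p (2 * m)) * chooseDivFactorial.factorial_mul_sub m hs
  · rw [hneg _ (by omega), chooseDivFactorial.of_neg m (by omega), mul_zero]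

theorem sum_antidiagonal_coeff_mul_coeff {p : ℤ → ℝ} {m l : ℕ} (hl : l ≤ 2 * m)
    (hodd : ∀ i : ℕ, Odd i → p (2 * m - i) = 0)
    (heven : ∀ s : ℕ, p (2 * m - 2 * s) = (-2) ^ s * m ! * p (2 * m) * chooseDivFactorial m (m - s))
    (hP : (m ! * p (2 * m)) ^ 2 = 1 / 4 ^ m) :
    ∑ ij ∈ antidiagonal (2 * (2 * m) - 2 * l), p (2 * m - ij.1) * p (2 * m - ij.2) =
      (-1) ^ l / 2 ^ l * chooseDivFactorialConv m l := by
  rw [show 2 * (2 * m) - 2 * l = 2 * (2 * m - l) by omega,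
    sum_antidiagonal_two_mul_eq_of_odd _ (fun ij h => by rw [hodd _ h, zero_mul])]
  have hterm : ∀ st ∈ antidiagonal (2 * m - l),
      p (2 * m - (2 * st.1 : ℕ)) * p (2 * m - (2 * st.2 : ℕ)) =
        (-2) ^ (2 * m - l) * (m ! * p (2 * m)) ^ 2 *
          (chooseDivFactorial m (m - st.1) * chooseDivFactorial m (m - st.2)) := by
    rintro ⟨s, t⟩ hst
    rw [HasAntidiagonal.mem_antidiagonal] at hst
    push_cast
    rw [heven, heven, ← hst, pow_add]
    ring
  rw [sum_congr rfl hterm, ← mul_sum, sum_antidiagonal_sub_mul_sub _ hl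
    (fun j => chooseDivFactorial.of_neg m) (fun j => chooseDivFactorial.of_lt m), hP]
  have h : ((-2 : ℝ)) ^ (2 * m - l) * (-2) ^ l = 4 ^ m := by
    rw [← pow_add, Nat.sub_add_cancel hl, pow_mul]; norm_num
  rw [← h]
  field_simp
  rw [← mul_pow, show (-2 : ℝ) * -1 = 2 by norm_num, mul_comm]
  rfl

/-- even case: the sum-of-squares identity
`∑_{k=0}^{n} (−1)^k F_k^n L_k(x) = ∑_{l=0}^{n} x^l ∑_{i+j = 2n−2l} p_{n−i} p_{n−j}`,
with the convention `p_j = 0` for `j ∉ {0, …, n}` (the coefficients `p` are indexed over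
`ℤ` to encode this convention). -/
theorem sos_identity_even (n : ℕ) (hn : Even n) (F : ℕ → ℝ) (p : ℤ → ℝ)
    (hF : ∀ k : ℕ, F k =
      if k ≤ n ∧ k % 2 = 0 then
        ((k.choose (k / 2) : ℝ) * ((n - k).choose ((n - k) / 2) : ℝ)) / 2 ^ n
      else 0)
    (hpn : p n = Real.sqrt ((n.choose (n / 2) : ℝ) / (2 ^ n * (n.factorial : ℝ))))
    (hpe : ∀ k : ℕ, 0 < k → k ≤ n → k % 2 = 0 →
      p ((n : ℤ) - k) = (-1 : ℝ) ^ (k / 2) * (2 : ℝ) ^ (k / 2) * ((k / 2).factorial : ℝ) *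
        ((n / 2).choose (k / 2) : ℝ) ^ 2 * p n)
    (hpo : ∀ k : ℕ, 0 < k → k ≤ n → k % 2 = 1 → p ((n : ℤ) - k) = 0)
    (hpout : ∀ j : ℤ, j < 0 ∨ (n : ℤ) < j → p j = 0) :
    ∀ x : ℝ,
      (∑ k ∈ Finset.range (n + 1), (-1 : ℝ) ^ k * F k * laguerreL k x)
        = ∑ l ∈ Finset.range (n + 1), x ^ l *
            ∑ ij ∈ Finset.HasAntidiagonal.antidiagonal (2 * n - 2 * l),
              p ((n : ℤ) - ij.1) * p ((n : ℤ) - ij.2) := by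
  obtain ⟨m, rfl⟩ : ∃ m, n = 2 * m := ⟨n / 2, by obtain ⟨r, hr⟩ := hn; omega⟩
  simp only [Nat.mul_div_cancel_left m two_pos, Nat.cast_mul, Nat.cast_ofNat] at hpn hpe hpo hpout
  have hP : (m ! * p (2 * m)) ^ 2 = 1 / 4 ^ m := hpn ▸ factorial_mul_sqrt_choose_div_sq m
  have hodd : ∀ i : ℕ, Odd i → p (2 * m - i) = 0 := fun i hi =>
    if h : i ≤ 2 * m then hpo i hi.pos h (Nat.odd_iff.mp hi) else hpout _ (.inl (by omega))
  have heven := coeff_two_mul_sub_two_mul (fun s hs hsm => by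
    simpa using hpe (2 * s) (by omega) (by omega) (by omega)) (fun j hj => hpout j (.inl hj))
  intro x
  rw [sum_mul_laguerreL]
  refine sum_congr rfl fun l hl => ?_
  have hl : l ≤ 2 * m := by simpa [Nat.lt_succ_iff] using hl
  push_cast
  rw [sum_antidiagonal_coeff_mul_coeff hl hodd heven hP, sum_weight_mul_choose hF,
    centralBinomChooseSum.eq_chooseDivFactorialConv m (by omega)]
  field_simp
end

section
/- For all natural numbers t and s with s ≤ t, the following binomial identity holds: ∑_{k=s}^{t} (1/(2^{2t} · (2s)!)) · C(2k, 2s) · C(2k, k) · C(2t−2k, t−k) = ∑_{i=0}^{2t−2s} (i! · (2t−2s−i)!/(2^{2s} · (2t)!)) · C(2t, t) · C(t, i)² · C(t, 2t−2s−i)². -/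
/-!
After clearing denominators and substituting `i = t - j` on the right, the identity becomes
`2^(2s) ∑_{a+b=t} C(2a,2s) C(2a,a) C(2b,b) = 4^t ∑_j C(2s,j) C(t,j) C(t,2s-j)`.
Writing `C(2a,l)` in the basis `C(a,u)` as `2^l C(2a,l) = ∑_u 4^u C(a,u) C(u,l-u)` reduces the
left side to the convolutions `W_u(t) = ∑_{a+b=t} C(a,u) C(2a,a) C(2b,b)`. For these Zeilberger's
algorithm finds the first-order recurrence `(t+1-u) W_u(t+1) = 4(t+1) W_u(t)`, with certificate
`(a-u)` times the summand, so `W_u(t) = 4^(t-u) C(2u,u) C(t,u)`. Expanding `C(t,j) C(t,2s-j)` over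
the size of the union of the two chosen subsets and applying Vandermonde brings the right side to
the same form `4^t ∑_u C(t,u) C(2u,u) C(u,2s-u)`.
-/

open Finset
open Nat (centralBinom)
open scoped Nat

namespace ZeilbergerEven

theorem sum_range_eq_sum_range_add_of_eq_zero {M : Type*} [AddCommMonoid M] {f : ℕ → M}
    {m n : ℕ} (hmn : m ≤ n) (hf : ∀ j < m, f j = 0) :
    ∑ j ∈ range n, f j = ∑ v ∈ range (n - m), f (m + v) := by
  rw [range_eq_Ico, ← sum_Ico_consecutive f (Nat.zero_le m) hmn, sum_Ico_eq_sum_range f m n,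
    sum_eq_zero fun j hj ↦ hf j (mem_Ico.1 hj).2, zero_add]

theorem add_choose_eq_sum_range (m n k : ℕ) :
    (m + n).choose k = ∑ j ∈ range (k + 1), m.choose j * n.choose (k - j) := by
  rw [Nat.add_choose_eq,
    Nat.sum_antidiagonal_eq_sum_range_succ (fun i j ↦ m.choose i * n.choose j)]

theorem choose_mul_choose_eq_sum (k : ℕ) {i l : ℕ} (hil : i ≤ l) :
    k.choose i * k.choose (l - i)
      = ∑ u ∈ range (l + 1), k.choose u * u.choose i * i.choose (l - u) := by
  rw [sum_range_eq_sum_range_add_of_eq_zero (m := i) (by omega) fun u hu ↦ by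
    simp [Nat.choose_eq_zero_of_lt hu]]
  have hterm : ∀ v ∈ range (l + 1 - i),
      k.choose (i + v) * (i + v).choose i * i.choose (l - (i + v))
        = k.choose i * ((k - i).choose v * i.choose (l - i - v)) := fun v _ ↦ by
    rw [Nat.choose_mul (Nat.le_add_right i v), Nat.add_sub_cancel_left, Nat.sub_add_eq, mul_assoc]
  rw [sum_congr rfl hterm, ← mul_sum, (by omega : l + 1 - i = l - i + 1),
    ← add_choose_eq_sum_range]
  rcases le_or_gt i k with hik | hik
  · rw [Nat.sub_add_cancel hik]
  · simp [Nat.choose_eq_zero_of_lt hik]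

theorem sum_range_choose_mul_choose (n m : ℕ) :
    ∑ p ∈ range (n + 1), n.choose p * p.choose m = n.choose m * 2 ^ (n - m) := by
  rcases le_or_gt m n with hmn | hmn
  · rw [sum_range_eq_sum_range_add_of_eq_zero (m := m) (by omega) fun p hp ↦ by
        simp [Nat.choose_eq_zero_of_lt hp],
      (by omega : n + 1 - m = n - m + 1)]
    simp_rw [Nat.choose_mul (Nat.le_add_right m _), Nat.add_sub_cancel_left, ← mul_sum,
      Nat.sum_range_choose]
  · rw [Nat.choose_eq_zero_of_lt hmn, zero_mul]
    exact sum_eq_zero fun p hp ↦ by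
      rw [Nat.choose_eq_zero_of_lt (by rw [mem_range] at hp; omega : p < m), mul_zero]

theorem two_pow_mul_choose_two_mul (a l : ℕ) :
    2 ^ l * (2 * a).choose l
      = ∑ u ∈ range (l + 1), 4 ^ u * (a.choose u * u.choose (l - u)) := by
  have hinner : ∀ u ∈ range (l + 1),
      2 ^ l * ∑ j ∈ range (l + 1), u.choose j * j.choose (l - u)
        = 4 ^ u * u.choose (l - u) := by
    intro u hu
    have hul : u ≤ l := Nat.lt_succ_iff.1 (mem_range.1 hu)
    rw [← sum_subset (range_subset_range.2 (by omega : u + 1 ≤ l + 1)) fun j _ hj ↦ by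
        rw [Nat.choose_eq_zero_of_lt (by rw [mem_range] at hj; omega), zero_mul],
      sum_range_choose_mul_choose]
    rcases le_or_gt (l - u) u with h | h
    · rw [mul_left_comm, ← pow_add, (by omega : l + (u - (l - u)) = 2 * u), pow_mul, mul_comm]
      norm_num
    · simp [Nat.choose_eq_zero_of_lt h]
  calc 2 ^ l * (2 * a).choose l
      = 2 ^ l * ∑ j ∈ range (l + 1), ∑ u ∈ range (l + 1),
          a.choose u * u.choose j * j.choose (l - u) := by
        rw [two_mul, add_choose_eq_sum_range]
        congr 1
        exact sum_congr rfl fun j hj ↦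
          choose_mul_choose_eq_sum a (Nat.lt_succ_iff.1 (mem_range.1 hj))
    _ = ∑ u ∈ range (l + 1),
          a.choose u * (2 ^ l * ∑ j ∈ range (l + 1), u.choose j * j.choose (l - u)) := by
        rw [sum_comm, mul_sum]
        simp_rw [mul_sum]
        exact sum_congr rfl fun u _ ↦ sum_congr rfl fun j _ ↦ by ring
    _ = ∑ u ∈ range (l + 1), 4 ^ u * (a.choose u * u.choose (l - u)) :=
        sum_congr rfl fun u hu ↦ by rw [hinner u hu]; ring

theorem sum_choose_mul_choose_mul_choose_sub (l u : ℕ) (hul : u ≤ l) :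
    ∑ j ∈ range (l + 1), l.choose j * (u.choose j * j.choose (l - u))
      = centralBinom u * u.choose (l - u) := by
  rcases le_or_gt (l - u) u with h | h
  · rw [sum_range_eq_sum_range_add_of_eq_zero (m := l - u) (by omega) fun j hj ↦ by
        simp [Nat.choose_eq_zero_of_lt hj],
      (by omega : l + 1 - (l - u) = u + 1)]
    have hterm : ∀ v ∈ range (u + 1),
        l.choose (l - u + v) * (u.choose (l - u + v) * (l - u + v).choose (l - u))
          = u.choose (l - u) * ((u - (l - u)).choose v * l.choose (u - v)) := fun v hv ↦ by
      rw [Nat.choose_mul (Nat.le_add_right _ _), Nat.add_sub_cancel_left,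
        ← Nat.choose_symm_of_eq_add (by rw [mem_range] at hv; omega : l = l - u + v + (u - v))]
      ring
    rw [sum_congr rfl hterm, ← mul_sum, ← add_choose_eq_sum_range, mul_comm,
      (by omega : u - (l - u) + l = 2 * u), Nat.centralBinom_eq_two_mul_choose]
  · rw [Nat.choose_eq_zero_of_lt h, mul_zero]
    refine sum_eq_zero fun j _ ↦ ?_
    rcases le_or_gt j u with hju | hju
    · rw [Nat.choose_eq_zero_of_lt (by omega : j < l - u), mul_zero, mul_zero]
    · rw [Nat.choose_eq_zero_of_lt hju, zero_mul, mul_zero]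

theorem sum_choose_mul_choose_mul_choose (l t : ℕ) :
    ∑ j ∈ range (l + 1), l.choose j * (t.choose j * t.choose (l - j))
      = ∑ u ∈ range (l + 1), t.choose u * (centralBinom u * u.choose (l - u)) := by
  calc ∑ j ∈ range (l + 1), l.choose j * (t.choose j * t.choose (l - j))
      = ∑ j ∈ range (l + 1), ∑ u ∈ range (l + 1),
          t.choose u * (l.choose j * (u.choose j * j.choose (l - u))) :=
        sum_congr rfl fun j hj ↦ by
          rw [choose_mul_choose_eq_sum t (Nat.lt_succ_iff.1 (mem_range.1 hj)), mul_sum]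
          exact sum_congr rfl fun u _ ↦ by ring
    _ = ∑ u ∈ range (l + 1), t.choose u * (centralBinom u * u.choose (l - u)) := by
        rw [sum_comm]
        refine sum_congr rfl fun u hu ↦ ?_
        rw [← mul_sum,
          sum_choose_mul_choose_mul_choose_sub l u (Nat.lt_succ_iff.1 (mem_range.1 hu))]

def chooseCentralBinomConv (q t : ℕ) : ℕ :=
  ∑ p ∈ antidiagonal t, p.1.choose q * (centralBinom p.1 * centralBinom p.2)

theorem choose_centralBinom_recurrence (q a b : ℕ) :
    (b + 1) * (a.choose q * (centralBinom a * centralBinom (b + 1)))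
      + (a + 1 - q) * ((a + 1).choose q * (centralBinom (a + 1) * centralBinom b))
      = 4 * (a + b + 1) * (a.choose q * (centralBinom a * centralBinom b)) := by
  have hq := Nat.choose_mul_succ_eq a q
  have ha := Nat.succ_mul_centralBinom_succ a
  have hb := Nat.succ_mul_centralBinom_succ b
  calc (b + 1) * (a.choose q * (centralBinom a * centralBinom (b + 1)))
        + (a + 1 - q) * ((a + 1).choose q * (centralBinom (a + 1) * centralBinom b))
      = a.choose q * centralBinom a * ((b + 1) * centralBinom (b + 1))
        + (a.choose q * (a + 1)) * centralBinom (a + 1) * centralBinom b := by rw [hq]; ring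
    _ = 4 * (a + b + 1) * (a.choose q * (centralBinom a * centralBinom b)) := by
        rw [hb, mul_assoc (a.choose q), mul_assoc (a.choose q), ha]; ring

theorem succ_sub_mul_chooseCentralBinomConv_succ (q t : ℕ) :
    (t + 1 - q) * chooseCentralBinomConv q (t + 1)
      = 4 * (t + 1) * chooseCentralBinomConv q t := by
  set F : ℕ × ℕ → ℕ := fun p ↦ p.1.choose q * (centralBinom p.1 * centralBinom p.2)
  calc (t + 1 - q) * chooseCentralBinomConv q (t + 1)
      = ∑ p ∈ antidiagonal (t + 1), (p.2 * F p + (p.1 - q) * F p) := by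
        rw [chooseCentralBinomConv, mul_sum]
        refine sum_congr rfl fun p hp ↦ ?_
        rw [HasAntidiagonal.mem_antidiagonal] at hp
        rcases le_or_gt q p.1 with h | h
        · rw [← add_mul, (by omega : t + 1 - q = p.2 + (p.1 - q))]
        · simp [F, Nat.choose_eq_zero_of_lt h]
    _ = ∑ p ∈ antidiagonal t,
          ((p.2 + 1) * F (p.1, p.2 + 1) + (p.1 + 1 - q) * F (p.1 + 1, p.2)) := by
        rw [sum_add_distrib, Nat.sum_antidiagonal_succ', Nat.sum_antidiagonal_succ,
          sum_add_distrib]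
        simp
    _ = 4 * (t + 1) * chooseCentralBinomConv q t := by
        rw [chooseCentralBinomConv, mul_sum]
        refine sum_congr rfl fun p hp ↦ ?_
        rw [← HasAntidiagonal.mem_antidiagonal.1 hp]
        exact choose_centralBinom_recurrence q p.1 p.2

theorem chooseCentralBinomConv_eq_zero_of_lt {q t : ℕ} (h : t < q) :
    chooseCentralBinomConv q t = 0 :=
  sum_eq_zero fun p hp ↦ by
    rw [Nat.choose_eq_zero_of_lt (by rw [HasAntidiagonal.mem_antidiagonal] at hp; omega),
      zero_mul]

theorem chooseCentralBinomConv_self (q : ℕ) : chooseCentralBinomConv q q = centralBinom q := by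
  rw [chooseCentralBinomConv, Nat.sum_antidiagonal_eq_sum_range_succ_mk, sum_range_succ,
    sum_eq_zero fun k hk ↦ by rw [Nat.choose_eq_zero_of_lt (mem_range.1 hk), zero_mul]]
  simp

theorem four_pow_mul_chooseCentralBinomConv (q t : ℕ) :
    4 ^ q * chooseCentralBinomConv q t = 4 ^ t * (centralBinom q * t.choose q) := by
  rcases lt_or_ge t q with h | h
  · rw [chooseCentralBinomConv_eq_zero_of_lt h, Nat.choose_eq_zero_of_lt h]; simp
  induction t, h using Nat.le_induction with
  | base => rw [chooseCentralBinomConv_self, Nat.choose_self, mul_one]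
  | succ t hqt ih =>
    refine Nat.eq_of_mul_eq_mul_left (by omega : 0 < t + 1 - q) ?_
    calc (t + 1 - q) * (4 ^ q * chooseCentralBinomConv q (t + 1))
        = 4 * (t + 1) * (4 ^ q * chooseCentralBinomConv q t) := by
          rw [mul_left_comm, succ_sub_mul_chooseCentralBinomConv_succ]; ring
      _ = (t + 1 - q) * (4 ^ (t + 1) * (centralBinom q * (t + 1).choose q)) := by
          rw [ih, pow_succ]
          linear_combination (4 * 4 ^ t * centralBinom q) * Nat.choose_mul_succ_eq t q

theorem two_pow_mul_sum_choose_two_mul_mul_centralBinom (l t : ℕ) :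
    2 ^ l * ∑ p ∈ antidiagonal t, (2 * p.1).choose l * (centralBinom p.1 * centralBinom p.2)
      = 4 ^ t * ∑ u ∈ range (l + 1), t.choose u * (centralBinom u * u.choose (l - u)) := by
  calc 2 ^ l * ∑ p ∈ antidiagonal t, (2 * p.1).choose l * (centralBinom p.1 * centralBinom p.2)
      = ∑ u ∈ range (l + 1), u.choose (l - u) * (4 ^ u * chooseCentralBinomConv u t) := by
        simp_rw [mul_sum, ← mul_assoc, two_pow_mul_choose_two_mul, sum_mul,
          chooseCentralBinomConv, mul_sum]
        rw [sum_comm]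
        exact sum_congr rfl fun u _ ↦ sum_congr rfl fun p _ ↦ by ring
    _ = 4 ^ t * ∑ u ∈ range (l + 1), t.choose u * (centralBinom u * u.choose (l - u)) := by
        simp_rw [four_pow_mul_chooseCentralBinomConv, mul_sum]
        exact sum_congr rfl fun u _ ↦ by ring

theorem sum_choose_mul_choose_mul_choose_reflect {t l : ℕ} (hl : l ≤ 2 * t) :
    ∑ i ∈ range (2 * t - l + 1), t.choose i * t.choose (2 * t - l - i) * l.choose (t - i)
      = ∑ j ∈ range (l + 1), l.choose j * (t.choose j * t.choose (l - j)) := by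
  refine sum_bij_ne_zero (fun i _ _ ↦ t - i) ?_ ?_ ?_ ?_ <;>
    simp only [mem_range, ne_eq, mul_eq_zero, Nat.choose_eq_zero_iff, not_or, not_lt]
  · omega
  · omega
  · exact fun j hj hj' ↦ ⟨t - j, by omega, by omega, by omega⟩
  · intro i hi hi'
    rw [Nat.choose_symm hi'.1.1, ← Nat.choose_symm (by omega : l - (t - i) ≤ t),
      (by omega : t - (l - (t - i)) = 2 * t - l - i)]
    ring

theorem factorial_mul_choose_sq_mul_choose_sq {t i j l : ℕ} (h : i + j + l = 2 * t) :
    l ! * (i ! * j ! * t.choose i ^ 2 * t.choose j ^ 2)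
      = t ! * t ! * (t.choose i * t.choose j * l.choose (t - i)) := by
  rcases le_or_gt i t with hi | hi
  · rcases le_or_gt j t with hj | hj
    · have hci := Nat.choose_mul_factorial_mul_factorial hi
      have hcj := Nat.choose_mul_factorial_mul_factorial hj
      have hcl := Nat.choose_mul_factorial_mul_factorial (by omega : t - i ≤ l)
      rw [(by omega : l - (t - i) = t - j)] at hcl
      refine Nat.eq_of_mul_eq_mul_right (by positivity : 0 < (t - i)! * (t - j)!) ?_
      calc l ! * (i ! * j ! * t.choose i ^ 2 * t.choose j ^ 2) * ((t - i)! * (t - j)!)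
          = l ! * (t.choose i * i ! * (t - i)!) * (t.choose j * j ! * (t - j)!)
              * (t.choose i * t.choose j) := by ring
        _ = t ! * t ! * (t.choose i * t.choose j * l.choose (t - i)) * ((t - i)! * (t - j)!) := by
            rw [hci, hcj, ← hcl]; ring
    · simp [Nat.choose_eq_zero_of_lt hj]
  · simp [Nat.choose_eq_zero_of_lt hi]

theorem factorial_mul_sum_factorial_mul_choose_sq {t l : ℕ} (hl : l ≤ 2 * t) :
    l ! * ∑ i ∈ range (2 * t - l + 1),
        i ! * (2 * t - l - i)! * t.choose i ^ 2 * t.choose (2 * t - l - i) ^ 2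
      = t ! * t ! * ∑ j ∈ range (l + 1), l.choose j * (t.choose j * t.choose (l - j)) := by
  rw [← sum_choose_mul_choose_mul_choose_reflect hl, mul_sum, mul_sum]
  exact sum_congr rfl fun i hi ↦
    factorial_mul_choose_sq_mul_choose_sq (by rw [mem_range] at hi; omega)

theorem sum_Icc_choose_two_mul_mul_choose (s t : ℕ) :
    ∑ k ∈ Icc s t, (2 * k).choose (2 * s) * (2 * k).choose k * (2 * t - 2 * k).choose (t - k)
      = ∑ p ∈ antidiagonal t,
          (2 * p.1).choose (2 * s) * (centralBinom p.1 * centralBinom p.2) := by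
  rw [Nat.sum_antidiagonal_eq_sum_range_succ_mk]
  refine sum_subset_zero_on_sdiff (fun k hk ↦ by rw [mem_Icc] at hk; rw [mem_range]; omega)
    (fun k hk ↦ ?_) fun k _ ↦ ?_
  · simp only [mem_sdiff, mem_range, mem_Icc] at hk
    simp [Nat.choose_eq_zero_of_lt (by omega : 2 * k < 2 * s)]
  · rw [Nat.centralBinom_eq_two_mul_choose, Nat.centralBinom_eq_two_mul_choose, Nat.mul_sub,
      mul_assoc]

theorem zeilberger_identity_even_nat {s t : ℕ} (hst : s ≤ t) :
    (∑ k ∈ Icc s t, (2 * k).choose (2 * s) * (2 * k).choose k * (2 * t - 2 * k).choose (t - k))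
        * (2 ^ (2 * s) * (2 * t)!)
      = ((2 * t).choose t * ∑ i ∈ range (2 * t - 2 * s + 1),
          i ! * (2 * t - 2 * s - i)! * t.choose i ^ 2 * t.choose (2 * t - 2 * s - i) ^ 2)
        * (2 ^ (2 * t) * (2 * s)!) := by
  have hA := two_pow_mul_sum_choose_two_mul_mul_centralBinom (2 * s) t
  have hR := factorial_mul_sum_factorial_mul_choose_sq (t := t) (l := 2 * s) (by omega)
  rw [sum_choose_mul_choose_mul_choose] at hR
  have hC := Nat.choose_mul_factorial_mul_factorial (by omega : t ≤ 2 * t)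
  rw [(by omega : 2 * t - t = t)] at hC
  rw [sum_Icc_choose_two_mul_mul_choose, pow_mul 2 2 t, ← hC]
  linear_combination (2 * t).choose t * t ! * t ! * hA - 4 ^ t * (2 * t).choose t * hR

end ZeilbergerEven

/-- the binomial identity (even case `n = 2t`, `l = 2s`) proved via
Zeilberger's algorithm, with the convention `C(a,b) = 0` when `b > a`. -/
theorem zeilberger_identity_even (t s : ℕ) (hst : s ≤ t) :
    (∑ k ∈ Finset.Icc s t,
      (1 / ((2 : ℝ) ^ (2 * t) * ((2 * s).factorial : ℝ))) *
        ((2 * k).choose (2 * s) : ℝ) * ((2 * k).choose k : ℝ) *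
        ((2 * t - 2 * k).choose (t - k) : ℝ))
    = ∑ i ∈ Finset.range (2 * t - 2 * s + 1),
      (((i.factorial : ℝ) * ((2 * t - 2 * s - i).factorial : ℝ)) /
          ((2 : ℝ) ^ (2 * s) * ((2 * t).factorial : ℝ))) *
        ((2 * t).choose t : ℝ) * ((t.choose i : ℝ)) ^ 2 *
        ((t.choose (2 * t - 2 * s - i) : ℝ)) ^ 2 := by
  calc _ = ((∑ k ∈ Icc s t, (2 * k).choose (2 * s) * (2 * k).choose k
              * (2 * t - 2 * k).choose (t - k) : ℕ) : ℝ) / (2 ^ (2 * t) * (2 * s)!) := by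
        push_cast
        rw [sum_div]
        exact sum_congr rfl fun _ _ ↦ by ring
    _ = (((2 * t).choose t * ∑ i ∈ range (2 * t - 2 * s + 1), i ! * (2 * t - 2 * s - i)!
              * t.choose i ^ 2 * t.choose (2 * t - 2 * s - i) ^ 2 : ℕ) : ℝ)
          / (2 ^ (2 * s) * (2 * t)!) := by
        rw [div_eq_div_iff (by positivity) (by positivity)]
        exact_mod_cast ZeilbergerEven.zeilberger_identity_even_nat hst
    _ = _ := by
        push_cast
        rw [mul_sum, sum_div]
        exact sum_congr rfl fun _ _ ↦ by ring
end
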